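/- arXiv:1710.10663 — 10 statements merged into one kernel-verified Lean document; each statement's English description precedes it below -/
import Mathlib

section
/- For any three vectors x, y, z in ℝ^n equipped with the ℓ1-norm, the radius of the smallest ℓ1-ball containing {x, y, z} equals half the diameter of {x, y, z}, i.e., inf over w in ℝ^n of max(‖x−w‖₁, ‖y−w‖₁, ‖z−w‖₁) = (1/2)·max(‖x−y‖₁, ‖y−z‖₁, ‖x−z‖₁). -/
/-!
Any centre `w` gives `d(x, y) ≤ d(x, w) + d(w, y)`, so the diameter is at most twice the radius.
Conversely, the coordinatewise median `m` of `x, y, z` lies metrically between each pair of them,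
so `d(x, m) + d(m, y) = d(x, y)` etc. If `x` is the point farthest from `m` and `r` is half the
diameter, moving from `m` towards `x` until the distance to `x` is `r` keeps `y` and `z` within `r`.
-/

open Set AffineMap WithLp

section LinearOrder

variable {α : Type*} [LinearOrder α]

def median3 (a b c : α) : α := max (min a b) (min (max a b) c)

lemma median3_mem_uIcc_left (a b c : α) : median3 a b c ∈ uIcc a b := by
  rw [mem_uIcc, median3]; grind

lemma median3_mem_uIcc_right (a b c : α) : median3 a b c ∈ uIcc b c := by
  rw [mem_uIcc, median3]; grind

lemma median3_mem_uIcc_outer (a b c : α) : median3 a b c ∈ uIcc a c := by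
  rw [mem_uIcc, median3]; grind

end LinearOrder

lemma max_max_dist_le_two_mul {P : Type*} [PseudoMetricSpace P] (x y z w : P) :
    max (max (dist x y) (dist y z)) (dist x z) ≤
      2 * max (max (dist x w) (dist y w)) (dist z w) := by
  set R := max (max (dist x w) (dist y w)) (dist z w)
  have hx : dist x w ≤ R := by simp [R]
  have hy : dist y w ≤ R := by simp [R]
  have hz : dist z w ≤ R := by simp [R]
  refine max_le (max_le ?_ ?_) ?_
  · linarith [dist_triangle_right x y w]
  · linarith [dist_triangle_right y z w]
  · linarith [dist_triangle_right x z w]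

lemma PiLp.dist_add_dist_eq_of_forall_mem_segment {ι : Type*} [Fintype ι] {β : ι → Type*}
    [∀ i, SeminormedAddCommGroup (β i)] [∀ i, NormedSpace ℝ (β i)] {x y z : PiLp 1 β}
    (h : ∀ i, y i ∈ segment ℝ (x i) (z i)) : dist x y + dist y z = dist x z := by
  simp only [PiLp.dist_eq_of_L1, ← Finset.sum_add_distrib]
  exact Finset.sum_congr rfl fun i _ => dist_add_dist_of_mem_segment (h i)

section NormedSpace

variable {E : Type*} [SeminormedAddCommGroup E] [NormedSpace ℝ E]

lemma exists_dist_eq_and_dist_eq_sub {r : ℝ} (hr : 0 ≤ r) {x m : E} (hrx : r ≤ dist x m) :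
    ∃ w, dist x w = r ∧ dist m w = dist x m - r := by
  rcases hr.eq_or_lt with rfl | hr
  · exact ⟨x, by simp, by simp [dist_comm]⟩
  have hxm : 0 < dist x m := hr.trans_le hrx
  refine ⟨lineMap x m (r / dist x m), ?_, ?_⟩
  · rw [dist_left_lineMap, Real.norm_of_nonneg (by positivity), div_mul_cancel₀ _ hxm.ne']
  · rw [dist_right_lineMap, Real.norm_of_nonneg (by rwa [sub_nonneg, div_le_one hxm]), sub_mul,
      one_mul, div_mul_cancel₀ _ hxm.ne']

lemma exists_dist_le_of_farthest {x y z m : E} {r : ℝ} (hy : dist y m ≤ dist x m)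
    (hz : dist z m ≤ dist x m) (hxy : dist x m + dist y m ≤ 2 * r)
    (hxz : dist x m + dist z m ≤ 2 * r) :
    ∃ w, dist x w ≤ r ∧ dist y w ≤ r ∧ dist z w ≤ r := by
  rcases le_total (dist x m) r with hxr | hrx
  · exact ⟨m, hxr, hy.trans hxr, hz.trans hxr⟩
  have hr : 0 ≤ r := by linarith [dist_nonneg (x := y) (y := m)]
  obtain ⟨w, hxw, hmw⟩ := exists_dist_eq_and_dist_eq_sub hr hrx
  refine ⟨w, hxw.le, ?_, ?_⟩
  · linarith [dist_triangle y m w]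
  · linarith [dist_triangle z m w]

lemma exists_dist_le_of_median {x y z m : E} {r : ℝ}
    (hxy : dist x m + dist m y = dist x y) (hyz : dist y m + dist m z = dist y z)
    (hxz : dist x m + dist m z = dist x z) (hrxy : dist x y ≤ 2 * r) (hryz : dist y z ≤ 2 * r)
    (hrxz : dist x z ≤ 2 * r) :
    ∃ w, dist x w ≤ r ∧ dist y w ≤ r ∧ dist z w ≤ r := by
  rw [dist_comm m] at hxy hyz hxz
  have hfarthest : (dist y m ≤ dist x m ∧ dist z m ≤ dist x m) ∨
      (dist x m ≤ dist y m ∧ dist z m ≤ dist y m) ∨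
      (dist x m ≤ dist z m ∧ dist y m ≤ dist z m) := by
    grind
  rcases hfarthest with ⟨hy, hz⟩ | ⟨hx, hz⟩ | ⟨hx, hy⟩
  · exact exists_dist_le_of_farthest hy hz (by linarith) (by linarith)
  · obtain ⟨w, hyw, hxw, hzw⟩ :=
      exists_dist_le_of_farthest (r := r) hx hz (by linarith) (by linarith)
    exact ⟨w, hxw, hyw, hzw⟩
  · obtain ⟨w, hzw, hxw, hyw⟩ :=
      exists_dist_le_of_farthest (r := r) hx hy (by linarith) (by linarith)
    exact ⟨w, hxw, hyw, hzw⟩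

theorem iInf_max_dist_eq_half_of_median {x y z m : E}
    (hxy : dist x m + dist m y = dist x y) (hyz : dist y m + dist m z = dist y z)
    (hxz : dist x m + dist m z = dist x z) :
    ⨅ w, max (max (dist x w) (dist y w)) (dist z w) =
      1 / 2 * max (max (dist x y) (dist y z)) (dist x z) := by
  set D := max (max (dist x y) (dist y z)) (dist x z)
  have hDxy : dist x y ≤ D := by simp [D]
  have hDyz : dist y z ≤ D := by simp [D]
  have hDxz : dist x z ≤ D := by simp [D]
  obtain ⟨w₀, hx, hy, hz⟩ := exists_dist_le_of_median (r := 1 / 2 * D) hxy hyz hxz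
    (by linarith) (by linarith) (by linarith)
  refine le_antisymm ((ciInf_le ⟨0, ?_⟩ w₀).trans (max_le (max_le hx hy) hz))
    (le_ciInf fun w => ?_)
  · rintro _ ⟨w, rfl⟩
    positivity
  · linarith [max_max_dist_le_two_mul x y z w]

end NormedSpace

/-- For any three vectors `x, y, z` in `ℝ^n` with the ℓ1-norm, the
Chebyshev radius of `{x,y,z}` equals half its diameter. -/
theorem stmt_0 (n : ℕ) (x y z : Fin n → ℝ) :
    (⨅ w : Fin n → ℝ,
        max (max (∑ j, |x j - w j|) (∑ j, |y j - w j|)) (∑ j, |z j - w j|))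
      = (1 / 2) *
        max (max (∑ j, |x j - y j|) (∑ j, |y j - z j|)) (∑ j, |x j - z j|) := by
  have hdist (u v : Fin n → ℝ) : ∑ j, |u j - v j| = dist (toLp 1 u) (toLp 1 v) := by
    simp [PiLp.dist_eq_of_L1, Real.dist_eq]
  have hreindex := (WithLp.equiv 1 (Fin n → ℝ)).symm.iInf_comp (g := fun w =>
    max (max (dist (toLp 1 x) w) (dist (toLp 1 y) w)) (dist (toLp 1 z) w))
  simp only [WithLp.equiv_symm_apply] at hreindex
  simp only [hdist, hreindex]
  refine iInf_max_dist_eq_half_of_median (m := toLp 1 fun j => median3 (x j) (y j) (z j))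
    ?_ ?_ ?_ <;> refine PiLp.dist_add_dist_eq_of_forall_mem_segment fun j => ?_ <;>
    rw [segment_eq_uIcc]
  exacts [median3_mem_uIcc_left .., median3_mem_uIcc_right .., median3_mem_uIcc_outer ..]
end

section
/- Let x⁽¹⁾, …, x⁽ᴸ⁾ ∈ {0,1}^n and let τ = min over y ∈ [0,1]^n of max_i (1/n)∑_j |x⁽ⁱ⁾_j − y_j|. Then there exists a binary point y ∈ {0,1}^n such that (1/n)∑_j |x⁽ⁱ⁾_j − y_j| ≤ τ + L/(2n) for all i = 1, …, L. -/
/-!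
Each normalized distance `(1/n) ∑ⱼ |xᵢⱼ - yⱼ|` to a binary word is affine in `y` on the cube
`[0,1]ⁿ`. As long as a point `z` of the cube has more than `L` fractional coordinates, the `L`
linear forms have a common null direction supported on them, and moving along it until a
coordinate reaches `0` or `1` keeps all `L` distances while fixing one more coordinate. The
resulting point has at most `L` fractional coordinates, and rounding each of them to the nearest
bit costs at most `1/2` apiece. Finally, a best binary point is chosen among the finitely many.
-/

open Finset

variable {ι κ : Type*} [Fintype ι] [Fintype κ]

noncomputable def fractionalCoords (z : ι → ℝ) : Finset ι :=
  univ.filter fun j => z j ≠ 0 ∧ z j ≠ 1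

lemma mem_fractionalCoords {z : ι → ℝ} {j : ι} :
    j ∈ fractionalCoords z ↔ z j ≠ 0 ∧ z j ≠ 1 := by
  simp [fractionalCoords]

lemma exists_pos_add_mul_eq_zero_or_one {a d : ℝ} (ha : a ∈ Set.Ioo (0 : ℝ) 1) (hd : d ≠ 0) :
    ∃ s > 0, (a + s * d = 0 ∨ a + s * d = 1) ∧
      ∀ t ∈ Set.Icc 0 s, a + t * d ∈ Set.Icc (0 : ℝ) 1 := by
  obtain ⟨ha₀, ha₁⟩ := ha
  rcases hd.lt_or_gt with hd | hd
  · refine ⟨a / -d, div_pos ha₀ (neg_pos.2 hd), Or.inl (by field_simp; ring), ?_⟩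
    rintro t ⟨ht₀, hts⟩
    rw [le_div_iff₀ (neg_pos.2 hd)] at hts
    constructor <;> nlinarith
  · refine ⟨(1 - a) / d, div_pos (sub_pos.2 ha₁) hd, Or.inr (by field_simp; ring), ?_⟩
    rintro t ⟨ht₀, hts⟩
    rw [le_div_iff₀ hd] at hts
    constructor <;> nlinarith

lemma exists_fractionalCoords_add_smul_ssubset {z u : ι → ℝ} (hz : ∀ j, z j ∈ Set.Icc (0 : ℝ) 1)
    (hu : u ≠ 0) (hsupp : ∀ j, u j ≠ 0 → j ∈ fractionalCoords z) :
    ∃ t : ℝ, (∀ j, (z + t • u) j ∈ Set.Icc (0 : ℝ) 1) ∧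
      fractionalCoords (z + t • u) ⊂ fractionalCoords z := by
  have hexit : ∀ j, u j ≠ 0 → ∃ s > 0, (z j + s * u j = 0 ∨ z j + s * u j = 1) ∧
      ∀ t ∈ Set.Icc 0 s, z j + t * u j ∈ Set.Icc (0 : ℝ) 1 := fun j hj =>
    have hfrac := mem_fractionalCoords.1 (hsupp j hj)
    exists_pos_add_mul_eq_zero_or_one
      ⟨(hz j).1.lt_of_ne' hfrac.1, (hz j).2.lt_of_ne hfrac.2⟩ hj
  choose! s hs_pos hs_hit hs_box using hexit
  obtain ⟨j₀, hj₀⟩ := Function.ne_iff.1 hu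
  obtain ⟨j₁, hj₁, hmin⟩ := (univ.filter fun j => u j ≠ 0).exists_min_image s
    ⟨j₀, by simpa using hj₀⟩
  rw [mem_filter] at hj₁
  have hfix : ∀ j, u j = 0 → (z + s j₁ • u) j = z j := fun j hj => by simp [hj]
  refine ⟨s j₁, fun j => ?_, ?_⟩
  · by_cases hj : u j = 0
    · rw [hfix j hj]; exact hz j
    · exact hs_box j hj _ ⟨(hs_pos j₁ hj₁.2).le, hmin j (by simpa using hj)⟩
  · refine (ssubset_iff_of_subset fun j hj => ?_).2 ⟨j₁, hsupp j₁ hj₁.2, fun h => ?_⟩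
    · by_cases hu0 : u j = 0
      · rwa [mem_fractionalCoords, ← hfix j hu0, ← mem_fractionalCoords]
      · exact hsupp j hu0
    · have := mem_fractionalCoords.1 h
      rcases hs_hit j₁ hj₁.2 with h' | h' <;> simp_all

lemma exists_ne_zero_forall_sum_mul_eq_zero (σ : κ → ι → ℝ) (F : Finset ι)
    (hF : Fintype.card κ < #F) :
    ∃ u : ι → ℝ, u ≠ 0 ∧ (∀ j ∉ F, u j = 0) ∧ ∀ i, ∑ j, σ i j * u j = 0 := by
  classical
  let φ : (ι → ℝ) →ₗ[ℝ] (κ → ℝ) × ((Fᶜ : Finset ι) → ℝ) :=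
    (Matrix.mulVecLin σ).prod (LinearMap.pi fun j => LinearMap.proj j.1)
  have hker : LinearMap.ker φ ≠ ⊥ := LinearMap.ker_ne_bot_of_finrank_lt <| by
    simp only [Module.finrank_prod, Module.finrank_fintype_fun_eq_card, Fintype.card_coe,
      card_compl]
    have := F.card_le_univ
    omega
  obtain ⟨u, hu, hu0⟩ := (Submodule.ne_bot_iff _).1 hker
  obtain ⟨hσu, hFu⟩ := Prod.mk_eq_zero.1 hu
  refine ⟨u, hu0, fun j hj => ?_, fun i => ?_⟩
  · simpa using congrFun hFu ⟨j, mem_compl.2 hj⟩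
  · exact congrFun hσu i

lemma abs_sub_eq_add_mul_of_eq_zero_or_one {a z : ℝ} (ha : a = 0 ∨ a = 1)
    (hz : z ∈ Set.Icc (0 : ℝ) 1) : |a - z| = a + (1 - 2 * a) * z := by
  rcases ha with rfl | rfl
  · rw [zero_sub, abs_neg, abs_of_nonneg hz.1]; ring
  · rw [abs_of_nonneg (by linarith [hz.2])]; ring

lemma exists_fractionalCoords_ssubset_sum_abs_sub_eq {x : κ → ι → ℝ}
    (hx : ∀ i j, x i j = 0 ∨ x i j = 1) {z : ι → ℝ}
    (hz : ∀ j, z j ∈ Set.Icc (0 : ℝ) 1) (hcard : Fintype.card κ < #(fractionalCoords z)) :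
    ∃ w : ι → ℝ, (∀ j, w j ∈ Set.Icc (0 : ℝ) 1) ∧ fractionalCoords w ⊂ fractionalCoords z ∧
      ∀ i, ∑ j, |x i j - w j| = ∑ j, |x i j - z j| := by
  obtain ⟨u, hu, hsupp, hker⟩ :=
    exists_ne_zero_forall_sum_mul_eq_zero (fun i j => 1 - 2 * x i j) _ hcard
  obtain ⟨t, hbox, hssubset⟩ :=
    exists_fractionalCoords_add_smul_ssubset hz hu fun j h => not_imp_comm.1 (hsupp j) h
  refine ⟨z + t • u, hbox, hssubset, fun i => ?_⟩
  -- on the cube each distance is affine in the point, and `u` is a common null direction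
  calc ∑ j, |x i j - (z + t • u) j|
      = ∑ j, (x i j + (1 - 2 * x i j) * z j) + t * ∑ j, (1 - 2 * x i j) * u j := by
        rw [mul_sum, ← sum_add_distrib]
        refine sum_congr rfl fun j _ => ?_
        rw [abs_sub_eq_add_mul_of_eq_zero_or_one (hx i j) (hbox j)]
        simp only [Pi.add_apply, Pi.smul_apply, smul_eq_mul]
        ring
    _ = ∑ j, |x i j - z j| := by
        rw [hker i, mul_zero, add_zero]
        exact sum_congr rfl fun j _ => (abs_sub_eq_add_mul_of_eq_zero_or_one (hx i j) (hz j)).symm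

lemma exists_card_fractionalCoords_le_sum_abs_sub_eq {x : κ → ι → ℝ}
    (hx : ∀ i j, x i j = 0 ∨ x i j = 1) {z : ι → ℝ}
    (hz : ∀ j, z j ∈ Set.Icc (0 : ℝ) 1) :
    ∃ w : ι → ℝ, (∀ j, w j ∈ Set.Icc (0 : ℝ) 1) ∧ #(fractionalCoords w) ≤ Fintype.card κ ∧
      ∀ i, ∑ j, |x i j - w j| = ∑ j, |x i j - z j| := by
  induction hm : #(fractionalCoords z) using Nat.strong_induction_on generalizing z with
  | _ m ih =>
    by_cases hcard : m ≤ Fintype.card κ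
    · exact ⟨z, hz, hm ▸ hcard, fun _ => rfl⟩
    obtain ⟨w, hw, hlt, hdist⟩ :=
      exists_fractionalCoords_ssubset_sum_abs_sub_eq hx hz (hm ▸ not_le.1 hcard)
    obtain ⟨v, hv, hvcard, hvdist⟩ := ih _ (hm ▸ card_lt_card hlt) hw rfl
    exact ⟨v, hv, hvcard, fun i => (hvdist i).trans (hdist i)⟩

lemma exists_binary_sum_abs_sub_le_add_card_fractionalCoords {z : ι → ℝ}
    (hz : ∀ j, z j ∈ Set.Icc (0 : ℝ) 1) :
    ∃ y : ι → ℝ, (∀ j, y j = 0 ∨ y j = 1) ∧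
      ∀ a : ι → ℝ, ∑ j, |a j - y j| ≤ ∑ j, |a j - z j| + #(fractionalCoords z) / 2 := by
  refine ⟨fun j => if 1 / 2 ≤ z j then 1 else 0,
    fun j => by dsimp only; split_ifs <;> simp, fun a => ?_⟩
  set y : ι → ℝ := fun j => if 1 / 2 ≤ z j then 1 else 0
  have hhalf : ∀ j, |z j - y j| ≤ 1 / 2 := fun j => by
    obtain ⟨h0, h1⟩ := hz j
    simp only [y]
    split_ifs <;> rw [abs_le] <;> constructor <;> linarith
  have hexact : ∀ j ∉ fractionalCoords z, |z j - y j| = 0 := fun j hj => by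
    rw [mem_fractionalCoords, not_and_or, not_not, not_not] at hj
    rcases hj with h | h <;> norm_num [y, h]
  calc ∑ j, |a j - y j| ≤ ∑ j, (|a j - z j| + |z j - y j|) :=
        sum_le_sum fun j _ => abs_sub_le _ _ _
    _ = ∑ j, |a j - z j| + ∑ j ∈ fractionalCoords z, |z j - y j| := by
        rw [sum_add_distrib, sum_subset (subset_univ _) fun j _ => hexact j]
    _ ≤ ∑ j, |a j - z j| + #(fractionalCoords z) / 2 := by
        gcongr
        calc ∑ j ∈ fractionalCoords z, |z j - y j| ≤ #(fractionalCoords z) • (1 / 2 : ℝ) :=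
              sum_le_card_nsmul _ _ _ fun j _ => hhalf j
          _ = #(fractionalCoords z) / 2 := by rw [nsmul_eq_mul]; ring

lemma exists_binary_sum_abs_sub_le {x : κ → ι → ℝ} (hx : ∀ i j, x i j = 0 ∨ x i j = 1)
    {z : ι → ℝ} (hz : ∀ j, z j ∈ Set.Icc (0 : ℝ) 1) :
    ∃ y : ι → ℝ, (∀ j, y j = 0 ∨ y j = 1) ∧
      ∀ i, ∑ j, |x i j - y j| ≤ ∑ j, |x i j - z j| + Fintype.card κ / 2 := by
  obtain ⟨w, hw, hcard, hdist⟩ := exists_card_fractionalCoords_le_sum_abs_sub_eq hx hz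
  obtain ⟨y, hy, hround⟩ := exists_binary_sum_abs_sub_le_add_card_fractionalCoords hw
  refine ⟨y, hy, fun i => (hround (x i)).trans ?_⟩
  rw [hdist i]
  gcongr

theorem stmt_2_general (n L : ℕ) (x : Fin L → Fin n → ℝ)
    (hx : ∀ i j, x i j = 0 ∨ x i j = 1) :
    ∃ y : Fin n → ℝ, (∀ j, y j = 0 ∨ y j = 1) ∧
      ∀ i, (1 / n : ℝ) * ∑ j, |x i j - y j| ≤
        (⨅ y' : {y' : Fin n → ℝ // ∀ j, 0 ≤ y' j ∧ y' j ≤ 1},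
            ⨆ i, (1 / n : ℝ) * ∑ j, |x i j - y'.1 j|) + L / (2 * n) := by
  set D : (Fin n → ℝ) → ℝ := fun y => ⨆ i, (1 / n : ℝ) * ∑ j, |x i j - y j|
  have hD_ge (y : Fin n → ℝ) (i : Fin L) : (1 / n : ℝ) * ∑ j, |x i j - y j| ≤ D y :=
    le_ciSup (Set.finite_range fun i => (1 / n : ℝ) * ∑ j, |x i j - y j|).bddAbove i
  have hD_nonneg (y : Fin n → ℝ) : 0 ≤ D y := Real.iSup_nonneg fun i => by positivity
  have hround (z : Fin n → ℝ) (hz : ∀ j, z j ∈ Set.Icc (0 : ℝ) 1) :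
      ∃ y : Fin n → ℝ, (∀ j, y j = 0 ∨ y j = 1) ∧ D y ≤ D z + L / (2 * n) := by
    obtain ⟨y, hy, hdist⟩ := exists_binary_sum_abs_sub_le hx hz
    refine ⟨y, hy, Real.iSup_le (fun i => ?_) (add_nonneg (hD_nonneg z) (by positivity))⟩
    calc (1 / n : ℝ) * ∑ j, |x i j - y j| ≤ (1 / n : ℝ) * (∑ j, |x i j - z j| + L / 2) := by
          gcongr; simpa using hdist i
      _ = (1 / n : ℝ) * ∑ j, |x i j - z j| + L / (2 * n) := by ring
      _ ≤ D z + L / (2 * n) := by grw [hD_ge z i]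
  -- the minimum of `D` over the finitely many binary points beats every rounded point
  obtain ⟨y₀, hy₀, hmin⟩ :=
    (Fintype.piFinset fun _ : Fin n => ({0, 1} : Finset ℝ)).exists_min_image D ⟨0, by simp⟩
  have : Nonempty {z : Fin n → ℝ // ∀ j, 0 ≤ z j ∧ z j ≤ 1} :=
    ⟨⟨0, fun _ => ⟨le_rfl, zero_le_one⟩⟩⟩
  have hy₀_le : D y₀ - L / (2 * n) ≤ ⨅ z : {z : Fin n → ℝ // ∀ j, 0 ≤ z j ∧ z j ≤ 1}, D z :=
    le_ciInf fun z => by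
      obtain ⟨y, hy, hyz⟩ := hround z.1 z.2
      grw [hmin y (by simpa using hy)]
      linarith
  refine ⟨y₀, by simpa using hy₀, fun i => (hD_ge y₀ i).trans ?_⟩
  linarith

/-- rounding the relaxed center of an `L`-tuple of binary words to a
binary point increases each normalized distance by at most `L/(2n)`. -/
theorem stmt_2 (n L : ℕ) (hn : 0 < n) (hL : 0 < L) (x : Fin L → Fin n → ℝ)
    (hx : ∀ i j, x i j = 0 ∨ x i j = 1) :
    ∃ y : Fin n → ℝ, (∀ j, y j = 0 ∨ y j = 1) ∧
      ∀ i, (1 / n : ℝ) * ∑ j, |x i j - y j| ≤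
        (⨅ y' : {y' : Fin n → ℝ // ∀ j, 0 ≤ y' j ∧ y' j ≤ 1},
            ⨆ i, (1 / n : ℝ) * ∑ j, |x i j - y'.1 j|) + L / (2 * n) :=
  stmt_2_general n L x hx
end

section
/- Let ε₁,…,ε_L be i.i.d. random signs in {+1,−1} with P[εᵢ = −1] = p, 0 < p < 1, and for a probability vector ω on {1,…,L} let f_ω(ε) = ∑ᵢ εᵢ ω(i). If L is even, then E|f_ω(ε)| ≥ E|f_Unif(ε)| for every ω, with equality if and only if ω = Unif, where Unif is the uniform probability vector (1/L,…,1/L). -/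
open Finset

namespace Stmt5

variable {L : ℕ}

noncomputable def W (p : ℝ) (s : Fin L → Bool) : ℝ := ∏ i, if s i then p else 1 - p

def sg (s : Fin L → Bool) (i : Fin L) : ℝ := if s i then -1 else 1

noncomputable def cnt (s : Fin L → Bool) : ℝ := ∑ i, sg s i

lemma W_pos {p : ℝ} (hp0 : 0 < p) (hp1 : p < 1) (s : Fin L → Bool) : 0 < W p s :=
  Finset.prod_pos fun i _ => by by_cases h : s i <;> simp [h] <;> linarith

lemma sign_mul_le_abs (y x : ℝ) : Real.sign y * x ≤ |x| := by
  rcases lt_trichotomy y 0 with h | h | h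
  · rw [Real.sign_of_neg h, neg_one_mul]; exact neg_le_abs x
  · rw [h, Real.sign_zero, zero_mul]; exact abs_nonneg x
  · rw [Real.sign_of_pos h, one_mul]; exact le_abs_self x

lemma sign_mul_self (x : ℝ) : Real.sign x * x = |x| := by
  rcases lt_trichotomy x 0 with h | h | h
  · rw [Real.sign_of_neg h, neg_one_mul, abs_of_neg h]
  · simp [h]
  · rw [Real.sign_of_pos h, one_mul, abs_of_pos h]

noncomputable def G (p : ℝ) (i : Fin L) : ℝ :=
  ∑ s : Fin L → Bool, W p s * Real.sign (cnt s) * sg s i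

lemma G_const (p : ℝ) (i j : Fin L) : G p i = G p j := by
  have hinv : Function.Involutive (fun s : Fin L → Bool => s ∘ Equiv.swap i j) := by
    intro s; funext x; simp [Function.comp, Equiv.swap_apply_self]
  refine Fintype.sum_bijective _ hinv.bijective _ _ fun s => ?_
  have hW : W p (s ∘ Equiv.swap i j) = W p s :=
    Fintype.prod_equiv (Equiv.swap i j)
      (fun x => if s ((Equiv.swap i j) x) then p else 1 - p)
      (fun x => if s x then p else 1 - p) (fun x => rfl)
  have hc : cnt (s ∘ Equiv.swap i j) = cnt s :=
    Fintype.sum_equiv (Equiv.swap i j)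
      (fun x => if s ((Equiv.swap i j) x) then (-1:ℝ) else 1)
      (fun x => if s x then (-1:ℝ) else 1) (fun x => rfl)
  have hs : sg (s ∘ Equiv.swap i j) j = sg s i := by
    simp [sg, Function.comp, Equiv.swap_apply_right]
  rw [hW, hc, hs]

lemma B_eq (p : ℝ) (ω : Fin L → ℝ) :
    (∑ s : Fin L → Bool, W p s * Real.sign (cnt s) * (∑ i, sg s i * ω i))
      = ∑ i, G p i * ω i := by
  simp only [Finset.mul_sum, G, Finset.sum_mul]
  rw [Finset.sum_comm]
  exact Finset.sum_congr rfl fun i _ => Finset.sum_congr rfl fun s _ => by ring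

lemma cnt_indicator (hLe : Even L) (A : Finset (Fin L)) (hA : A.card = L / 2) :
    cnt (fun i => decide (i ∈ A)) = 0 := by
  have h1 : ∀ i : Fin L, sg (fun i => decide (i ∈ A)) i
      = 1 - 2 * (if i ∈ A then (1:ℝ) else 0) := by
    intro i; by_cases h : i ∈ A <;> simp [sg, h] <;> norm_num
  have h2 : cnt (fun i => decide (i ∈ A)) = (L : ℝ) - 2 * A.card := by
    rw [cnt, Finset.sum_congr rfl fun i _ => h1 i, Finset.sum_sub_distrib]
    rw [← Finset.mul_sum, Finset.sum_boole]
    have h3 : Finset.univ.filter (· ∈ A) = A := by ext x; simp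
    simp [h3]
  have h4 : L / 2 * 2 = L := Nat.div_mul_cancel hLe.two_dvd
  have h5 : ((L / 2 : ℕ) : ℝ) * 2 = (L : ℝ) := by exact_mod_cast congrArg Nat.cast h4
  rw [h2, hA]
  linarith

theorem main (L : ℕ) (hL : 0 < L) (hLe : Even L) (p : ℝ) (hp0 : 0 < p) (hp1 : p < 1)
    (ω : Fin L → ℝ) (hω0 : ∀ i, 0 ≤ ω i) (hω1 : ∑ i, ω i = 1) :
    (∑ s : Fin L → Bool, W p s * |∑ i, sg s i * ω i|)
      ≥ (∑ s : Fin L → Bool, W p s * |∑ i, sg s i * (1 / L : ℝ)|) ∧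
    ((∑ s : Fin L → Bool, W p s * |∑ i, sg s i * ω i|)
      = (∑ s : Fin L → Bool, W p s * |∑ i, sg s i * (1 / L : ℝ)|)
      ↔ ω = fun _ => (1 / L : ℝ)) := by
  have i0 : Fin L := ⟨0, hL⟩
  have hLR : (0:ℝ) < (L:ℝ) := by exact_mod_cast hL
  have hu1 : ∑ _i : Fin L, (1 / L : ℝ) = 1 := by
    rw [Finset.sum_const, Finset.card_univ, Fintype.card_fin, nsmul_eq_mul]
    field_simp
  have hBc : ∀ v : Fin L → ℝ, (∑ i, v i) = 1 →
      (∑ s : Fin L → Bool, W p s * Real.sign (cnt s) * (∑ i, sg s i * v i)) = G p i0 := by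
    intro v hv
    rw [B_eq]
    calc ∑ i, G p i * v i = ∑ i, G p i0 * v i :=
          Finset.sum_congr rfl fun i _ => by rw [G_const p i i0]
      _ = G p i0 * ∑ i, v i := by rw [Finset.mul_sum]
      _ = G p i0 := by rw [hv, mul_one]
  have hAu : ∀ s : Fin L → Bool,
      W p s * |∑ i, sg s i * (1 / L : ℝ)|
        = W p s * Real.sign (cnt s) * (∑ i, sg s i * (1 / L : ℝ)) := by
    intro s
    have hx : (∑ i, sg s i * (1 / L : ℝ)) = cnt s * (1 / L : ℝ) := by
      rw [cnt, Finset.sum_mul]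
    rw [hx, mul_assoc, ← mul_assoc (Real.sign (cnt s)), sign_mul_self, abs_mul,
      abs_of_nonneg (by positivity : (0:ℝ) ≤ 1 / (L:ℝ))]
  have hAuB : (∑ s : Fin L → Bool, W p s * |∑ i, sg s i * (1 / L : ℝ)|) = G p i0 := by
    rw [Finset.sum_congr rfl fun s _ => hAu s]
    exact hBc _ hu1
  have hterm : ∀ s : Fin L → Bool,
      W p s * Real.sign (cnt s) * (∑ i, sg s i * ω i) ≤ W p s * |∑ i, sg s i * ω i| := by
    intro s
    rw [mul_assoc]
    exact mul_le_mul_of_nonneg_left (sign_mul_le_abs _ _) (W_pos hp0 hp1 s).le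
  have hineq : (∑ s : Fin L → Bool, W p s * |∑ i, sg s i * ω i|)
      ≥ (∑ s : Fin L → Bool, W p s * |∑ i, sg s i * (1 / L : ℝ)|) := by
    rw [hAuB, ← hBc ω hω1]
    exact Finset.sum_le_sum fun s _ => hterm s
  refine ⟨hineq, ?_, ?_⟩
  · intro heq
    have hzero : ∑ s : Fin L → Bool,
        (W p s * |∑ i, sg s i * ω i| - W p s * Real.sign (cnt s) * (∑ i, sg s i * ω i)) = 0 := by
      rw [Finset.sum_sub_distrib, hBc ω hω1, ← hAuB, heq, sub_self]
    have hall := (Finset.sum_eq_zero_iff_of_nonneg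
      (fun s _ => sub_nonneg.mpr (hterm s))).mp hzero
    have hbal : ∀ A : Finset (Fin L), A.card = L / 2 →
        (∑ i, sg (fun i => decide (i ∈ A)) i * ω i) = 0 := by
      intro A hA
      have h := hall (fun i => decide (i ∈ A)) (Finset.mem_univ _)
      have h2 := sub_eq_zero.mp h
      rw [cnt_indicator hLe A hA, Real.sign_zero, mul_zero, zero_mul] at h2
      rcases mul_eq_zero.mp h2 with h3 | h3
      · exact absurd h3 (W_pos hp0 hp1 _).ne'
      · exact abs_eq_zero.mp h3
    have hconst : ∀ j k : Fin L, ω j = ω k := by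
      intro j k
      by_cases hjk : j = k
      · rw [hjk]
      have hkj : k ≠ j := fun h => hjk h.symm
      have hL2 : 2 ≤ L := Nat.le_of_dvd hL hLe.two_dvd
      have hhalf : L / 2 * 2 = L := Nat.div_mul_cancel hLe.two_dvd
      have h1n : 1 ≤ L / 2 := by omega
      have hcard : L / 2 ≤ (Finset.univ.erase j).card := by
        rw [Finset.card_erase_of_mem (Finset.mem_univ j), Finset.card_univ, Fintype.card_fin]
        omega
      have hsub : ({k} : Finset (Fin L)) ⊆ Finset.univ.erase j := by
        simp [Finset.singleton_subset_iff, Finset.mem_erase, hkj]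
      obtain ⟨A, hkA, hAsub, hAcard⟩ := Finset.exists_subsuperset_card_eq hsub
        (by simpa using h1n) hcard
      have hkA' : k ∈ A := hkA (Finset.mem_singleton_self k)
      have hjA : j ∉ A := fun hj => (Finset.mem_erase.mp (hAsub hj)).1 rfl
      have hjek : j ∉ A.erase k := fun h => hjA (Finset.mem_of_mem_erase h)
      have hA'card : (insert j (A.erase k)).card = L / 2 := by
        rw [Finset.card_insert_of_notMem hjek, Finset.card_erase_of_mem hkA']
        omega
      have hXA := hbal A hAcard
      have hXA' := hbal (insert j (A.erase k)) hA'card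
      have key : (∑ i, sg (fun i => decide (i ∈ A)) i * ω i)
          - (∑ i, sg (fun i => decide (i ∈ insert j (A.erase k))) i * ω i)
          = 2 * ω j - 2 * ω k := by
        rw [← Finset.sum_sub_distrib]
        have hsum : ∀ i ∈ Finset.univ, i ∉ ({j, k} : Finset (Fin L)) →
            sg (fun i => decide (i ∈ A)) i * ω i
              - sg (fun i => decide (i ∈ insert j (A.erase k))) i * ω i = 0 := by
          intro i _ hi
          rw [Finset.mem_insert, Finset.mem_singleton] at hi
          push_neg at hi
          have hiff : (i ∈ insert j (A.erase k)) ↔ (i ∈ A) := by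
            rw [Finset.mem_insert, Finset.mem_erase]
            constructor
            · rintro (h | h)
              · exact absurd h hi.1
              · exact h.2
            · intro h; exact Or.inr ⟨hi.2, h⟩
          simp only [sg, decide_eq_true_eq]
          rw [if_congr hiff rfl rfl]
          ring
        rw [← Finset.sum_subset (Finset.subset_univ ({j, k} : Finset (Fin L))) hsum,
          Finset.sum_pair hjk]
        have e1 : sg (fun i => decide (i ∈ A)) j = 1 := by simp [sg, hjA]
        have e2 : sg (fun i => decide (i ∈ insert j (A.erase k))) j = -1 := by
          simp [sg]
        have e3 : sg (fun i => decide (i ∈ A)) k = -1 := by simp [sg, hkA']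
        have e4 : sg (fun i => decide (i ∈ insert j (A.erase k))) k = 1 := by
          simp [sg, hkj]
        rw [e1, e2, e3, e4]
        ring
      rw [hXA, hXA'] at key
      linarith
    have huniq : ∀ j : Fin L, ω j = 1 / L := by
      intro j
      have hsum : ∑ i, ω i = (L : ℝ) * ω j := by
        rw [Finset.sum_congr rfl fun i _ => hconst i j, Finset.sum_const,
          Finset.card_univ, Fintype.card_fin, nsmul_eq_mul]
      have := hsum.symm.trans hω1
      field_simp
      linarith
    exact funext huniq
  · intro h
    rw [h]

end Stmt5

/-- for even `L` and i.i.d. random signs with `P[ε = -1] = p`,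
`E|f_ω(ε)| ≥ E|f_Unif(ε)|` for every probability vector `ω` on `{1,…,L}`, with
equality iff `ω` is uniform.  Here `s i = true` encodes `εᵢ = -1`. -/
theorem stmt_5 (L : ℕ) (hL : 0 < L) (hLe : Even L) (p : ℝ) (hp0 : 0 < p) (hp1 : p < 1)
    (ω : Fin L → ℝ) (hω0 : ∀ i, 0 ≤ ω i) (hω1 : ∑ i, ω i = 1) :
    (∑ s : Fin L → Bool, (∏ i, if s i then p else 1 - p) *
        |∑ i, (if s i then (-1 : ℝ) else 1) * ω i|)
      ≥ (∑ s : Fin L → Bool, (∏ i, if s i then p else 1 - p) *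
          |∑ i, (if s i then (-1 : ℝ) else 1) * (1 / L : ℝ)|) ∧
    ((∑ s : Fin L → Bool, (∏ i, if s i then p else 1 - p) *
        |∑ i, (if s i then (-1 : ℝ) else 1) * ω i|)
      = (∑ s : Fin L → Bool, (∏ i, if s i then p else 1 - p) *
          |∑ i, (if s i then (-1 : ℝ) else 1) * (1 / L : ℝ)|)
      ↔ ω = fun _ => (1 / L : ℝ)) := by
  exact Stmt5.main L hL hLe p hp0 hp1 ω hω0 hω1
end

section
/- Let C ⊆ {0,1}^n be a code and p ∈ [0,1/2] such that there exists y ∈ [0,1]^n with ‖c − y‖ ≤ p for all c ∈ C (i.e., rad(C) ≤ p). Then for every probability measure ω on {1,…,L}, the expectation over L independent uniformly chosen codewords w⁽¹⁾,…,w⁽ᴸ⁾ ∈ C of mrad_ω(w⁽¹⁾,…,w⁽ᴸ⁾) is at most τ_{Unif,p}, where τ_{Unif,p} is the expected uniform mean radius of L i.i.d. Ber(p) bit strings. -/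
/-!
Fix a coordinate `j`. The `j`-th bits of `L` independent uniform codewords are i.i.d. `Ber(q_j)`,
where `q_j` is the fraction of codewords with a `1` there, and moving `y_j` to the `ω`-majority
bit bounds the mean radius by the average over `j` of the `ω`-weight of the minority bit.
For exchangeable bits, testing the `ω`-weighted margin against the sign of the unweighted one
shows that in expectation the weighted margin is at least `1/L` of the unweighted one, so
coordinate `j` contributes at most `τ_{Unif,q_j}`. As a function of `q`, `τ_{Unif,q}` is the
Bernstein polynomial of the concave `k ↦ min(k, L - k) / L`, hence concave on `[0, 1]`, and it
is symmetric about `1/2`, hence increasing on `[0, 1/2]`. So replacing `q_j` by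
`min(q_j, 1 - q_j)`, Jensen's inequality and the radius bound `avg_j min(q_j, 1 - q_j) ≤ p`
finish the proof.
-/

open Finset Polynomial
open scoped fwdDiff

noncomputable def bernsteinOp (n : ℕ) (f : ℕ → ℝ) : ℝ[X] :=
  ∑ k ∈ range (n + 1), f k • bernsteinPolynomial ℝ n k

lemma derivative_bernsteinOp_succ (n : ℕ) (f : ℕ → ℝ) :
    derivative (bernsteinOp (n + 1) f) = (n + 1 : ℝ[X]) * bernsteinOp n (Δ_[1] f) := by
  simp only [bernsteinOp, derivative_sum, derivative_smul, fwdDiff, sub_smul, sum_sub_distrib,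
    mul_sub, mul_sum, mul_smul_comm]
  rw [sum_range_succ', bernsteinPolynomial.derivative_zero]
  simp only [bernsteinPolynomial.derivative_succ_aux, mul_sub, smul_sub, sum_sub_distrib]
  rw [sum_range_succ
      (fun k => f (k + 1) • ((n + 1 : ℝ[X]) * bernsteinPolynomial ℝ n (k + 1))),
    bernsteinPolynomial.eq_zero_of_lt ℝ (Nat.lt_succ_self n),
    sum_range_succ' (fun k => f k • ((n + 1 : ℝ[X]) * bernsteinPolynomial ℝ n k))]
  push_cast
  simp only [smul_zero, mul_zero, add_zero, neg_mul, smul_neg]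
  ring

lemma derivative_bernsteinOp (n : ℕ) (f : ℕ → ℝ) :
    derivative (bernsteinOp n f) = (n : ℝ[X]) * bernsteinOp (n - 1) (Δ_[1] f) := by
  cases n with
  | zero => simp [bernsteinOp, bernsteinPolynomial]
  | succ n => simpa using derivative_bernsteinOp_succ n f

lemma eval_bernsteinPolynomial_nonneg (n k : ℕ) {x : ℝ} (hx : x ∈ Set.Icc (0 : ℝ) 1) :
    0 ≤ (bernsteinPolynomial ℝ n k).eval x := by
  simp only [bernsteinPolynomial, eval_mul, eval_pow, eval_sub, eval_one, eval_X, eval_natCast]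
  exact mul_nonneg (mul_nonneg (Nat.cast_nonneg _) (pow_nonneg hx.1 _))
    (pow_nonneg (sub_nonneg.2 hx.2) _)

lemma concaveOn_eval_bernsteinOp (n : ℕ) {f : ℕ → ℝ}
    (hf : ∀ k, k + 2 ≤ n → Δ_[1] (Δ_[1] f) k ≤ 0) :
    ConcaveOn ℝ (Set.Icc 0 1) fun x => (bernsteinOp n f).eval x := by
  refine concaveOn_of_hasDerivWithinAt2_nonpos (convex_Icc 0 1)
    (Polynomial.continuousOn _) (fun x _ => (Polynomial.hasDerivAt _ x).hasDerivWithinAt)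
    (fun x _ => (Polynomial.hasDerivAt _ x).hasDerivWithinAt) fun x hx => ?_
  rw [interior_Icc] at hx
  rw [derivative_bernsteinOp, derivative_mul, derivative_natCast, zero_mul, zero_add,
    derivative_bernsteinOp, eval_mul, eval_mul, eval_natCast, eval_natCast]
  rcases lt_or_ge n 2 with hn | hn
  · interval_cases n <;> simp
  refine mul_nonpos_of_nonneg_of_nonpos (Nat.cast_nonneg _)
    (mul_nonpos_of_nonneg_of_nonpos (Nat.cast_nonneg _) ?_)
  rw [bernsteinOp, eval_finsetSum]
  refine sum_nonpos fun k hk => ?_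
  rw [eval_smul, smul_eq_mul]
  exact mul_nonpos_of_nonpos_of_nonneg (hf k (by simp at hk; omega))
    (eval_bernsteinPolynomial_nonneg _ _ (Set.Ioo_subset_Icc_self hx))

lemma ConcaveOn.monotoneOn_of_one_sub {f : ℝ → ℝ} (hf : ConcaveOn ℝ (Set.Icc 0 1) f)
    (hsymm : ∀ x, f (1 - x) = f x) : MonotoneOn f (Set.Icc 0 (1 / 2)) := by
  intro x hx y hy hxy
  have h := hf.min_le_of_mem_Icc (x := x) (y := 1 - x) ⟨hx.1, by linarith [hx.2]⟩
    ⟨by linarith [hx.2], by linarith [hx.1]⟩ ⟨hxy, by linarith [hx.2, hy.2]⟩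
  rwa [hsymm, min_self] at h

/-- Jensen's inequality after folding each `q i` into `[0, 1/2]` by the symmetry. -/
lemma ConcaveOn.sum_mul_le_of_sum_mul_min_le {ι : Type*} [Fintype ι] {f : ℝ → ℝ}
    (hf : ConcaveOn ℝ (Set.Icc 0 1) f) (hsymm : ∀ x, f (1 - x) = f x)
    {w q : ι → ℝ} (hw0 : ∀ i, 0 ≤ w i) (hw1 : ∑ i, w i = 1)
    (hq : ∀ i, q i ∈ Set.Icc (0 : ℝ) 1) {p : ℝ} (hp : p ∈ Set.Icc (0 : ℝ) (1 / 2))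
    (hqp : ∑ i, w i * min (q i) (1 - q i) ≤ p) :
    ∑ i, w i * f (q i) ≤ f p := by
  have hfold : ∀ i, f (q i) = f (min (q i) (1 - q i)) := fun i => by
    rcases le_total (q i) (1 - q i) with h | h
    · rw [min_eq_left h]
    · rw [min_eq_right h, hsymm]
  have hmin : ∀ i, min (q i) (1 - q i) ∈ Set.Icc (0 : ℝ) 1 := fun i =>
    ⟨le_min (hq i).1 (sub_nonneg.2 (hq i).2), (min_le_left _ _).trans (hq i).2⟩
  have hjensen := hf.le_map_sum (t := univ) (fun i _ => hw0 i) hw1 fun i _ => hmin i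
  simp only [smul_eq_mul] at hjensen
  calc ∑ i, w i * f (q i) = ∑ i, w i * f (min (q i) (1 - q i)) := by simp only [← hfold]
    _ ≤ f (∑ i, w i * min (q i) (1 - q i)) := hjensen
    _ ≤ f p := hf.monotoneOn_of_one_sub hsymm
        ⟨sum_nonneg fun i _ => mul_nonneg (hw0 i) (hmin i).1, hqp.trans hp.2⟩ hp hqp

section Exchangeable

variable {α : Type*} [Fintype α] {L : ℕ}

def IsExchangeable (W : (Fin L → α) → ℝ) : Prop :=
  ∀ (σ : Equiv.Perm (Fin L)) (s : Fin L → α), W (s ∘ σ) = W s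

lemma mul_sign_le_abs (x y : ℝ) : x * (SignType.sign y : ℝ) ≤ |x| := by
  cases SignType.sign y <;> simp [le_abs_self, neg_le_abs]

/-- Testing against the sign of `∑ g (s i)`: exchangeability makes `∑ W s * g (s i) * sign`
independent of `i`, so averaging it with the weights `ω` or uniformly gives the same value. -/
lemma IsExchangeable.sum_mul_abs_sum_le {W : (Fin L → α) → ℝ} (hW : IsExchangeable W)
    (hW0 : ∀ s, 0 ≤ W s) (g : α → ℝ) {ω : Fin L → ℝ} (hω : ∑ i, ω i = 1) :
    ∑ s, W s * |∑ i, g (s i)| ≤ L * ∑ s, W s * |∑ i, ω i * g (s i)| := by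
  classical
  set u : (Fin L → α) → ℝ := fun s => SignType.sign (∑ i, g (s i))
  set V : Fin L → ℝ := fun i => ∑ s, W s * (g (s i) * u s)
  have hV : ∀ i j, V i = V j := fun i j => by
    have hinv : Function.Involutive fun s : Fin L → α => s ∘ Equiv.swap i j :=
      fun s => by ext; simp
    refine Fintype.sum_bijective _ hinv.bijective _ _ fun s => ?_
    have hu : u (s ∘ Equiv.swap i j) = u s :=
      congrArg (fun x : ℝ => (SignType.sign x : ℝ)) (Equiv.sum_comp _ fun k => g (s k))
    rw [hW, hu, Function.comp_apply, Equiv.swap_apply_right]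
  have hsum : ∑ i, V i = ∑ s, W s * |∑ i, g (s i)| := by
    rw [sum_comm]
    refine sum_congr rfl fun s _ => ?_
    rw [← mul_sum, ← sum_mul, self_mul_sign]
  have hmean : ∑ i, V i = L * ∑ i, ω i * V i := by
    have hconst : ∀ i, V i = ∑ j, ω j * V j := fun i => by
      simp only [hV _ i, ← sum_mul, hω, one_mul]
    rw [sum_congr rfl fun i _ => hconst i, sum_const, card_univ, Fintype.card_fin, nsmul_eq_mul]
  have htest : ∑ i, ω i * V i ≤ ∑ s, W s * |∑ i, ω i * g (s i)| := by
    simp only [V, mul_sum]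
    rw [sum_comm]
    refine sum_le_sum fun s _ => ?_
    calc ∑ i, ω i * (W s * (g (s i) * u s)) = W s * ((∑ i, ω i * g (s i)) * u s) := by
          rw [sum_mul, mul_sum]; exact sum_congr rfl fun i _ => by ring
      _ ≤ _ := mul_le_mul_of_nonneg_left (mul_sign_le_abs _ _) (hW0 s)
  rw [← hsum, hmean]
  exact mul_le_mul_of_nonneg_left htest (Nat.cast_nonneg L)

end Exchangeable

section BitStrings

variable {L : ℕ}

def minorityWeight (ω : Fin L → ℝ) (s : Fin L → Bool) : ℝ :=
  min (∑ i with s i = false, ω i) (∑ i with s i = true, ω i)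

lemma minorityWeight_eq_sub_abs (ω : Fin L → ℝ) (s : Fin L → Bool) :
    minorityWeight ω s = ((∑ i, ω i) - |∑ i, ω i * if s i then 1 else -1|) / 2 := by
  have htotal : ∑ i, ω i = (∑ i with s i = false, ω i) + ∑ i with s i = true, ω i := by
    rw [add_comm, ← sum_filter_add_sum_filter_not univ (fun i => s i = true)]
    simp
  have hdiff : ∑ i, ω i * (if s i then 1 else -1) =
      (∑ i with s i = true, ω i) - ∑ i with s i = false, ω i := by
    rw [sum_filter, sum_filter, ← sum_sub_distrib]
    exact sum_congr rfl fun i _ => by cases s i <;> simp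
  rw [minorityWeight, htotal, hdiff]
  linarith [min_add_max (∑ i with s i = false, ω i) (∑ i with s i = true, ω i),
    max_sub_min_eq_abs (∑ i with s i = false, ω i) (∑ i with s i = true, ω i)]

lemma IsExchangeable.mul_sum_mul_minorityWeight_le {W : (Fin L → Bool) → ℝ}
    (hW : IsExchangeable W) (hW0 : ∀ s, 0 ≤ W s) {ω : Fin L → ℝ} (hω : ∑ i, ω i = 1) :
    L * ∑ s, W s * minorityWeight ω s ≤ ∑ s, W s * minorityWeight (fun _ => 1) s := by
  have h := hW.sum_mul_abs_sum_le hW0 (fun b => if b then 1 else -1) hω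
  have hsplit : ∀ (c : ℝ) (a : (Fin L → Bool) → ℝ),
      ∑ s, W s * ((c - a s) / 2) = (c * ∑ s, W s - ∑ s, W s * a s) / 2 := fun c a => by
    rw [mul_sum, ← sum_sub_distrib, sum_div]
    exact sum_congr rfl fun s _ => by ring
  simp only [minorityWeight_eq_sub_abs, hω, sum_const, card_univ, Fintype.card_fin, nsmul_eq_mul,
    mul_one, one_mul] at h ⊢
  rw [hsplit, hsplit]
  linarith

noncomputable def bernoulliWeight (q : ℝ) (s : Fin L → Bool) : ℝ :=
  ∏ i, if s i then q else 1 - q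

lemma bernoulliWeight_nonneg {q : ℝ} (hq : q ∈ Set.Icc (0 : ℝ) 1) (s : Fin L → Bool) :
    0 ≤ bernoulliWeight q s :=
  prod_nonneg fun i _ => by split_ifs <;> linarith [hq.1, hq.2]

lemma isExchangeable_bernoulliWeight (q : ℝ) : IsExchangeable (bernoulliWeight (L := L) q) :=
  fun σ s => Equiv.prod_comp σ fun i => if s i then q else 1 - q

lemma bernoulliWeight_one_sub (q : ℝ) (s : Fin L → Bool) :
    bernoulliWeight (1 - q) s = bernoulliWeight q (fun i => !s i) :=
  prod_congr rfl fun i _ => by cases h : s i <;> simp [h]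

lemma bernoulliWeight_eq_pow_mul_pow (q : ℝ) (s : Fin L → Bool) :
    bernoulliWeight q s = q ^ #{i | s i = true} * (1 - q) ^ (L - #{i | s i = true}) := by
  rw [bernoulliWeight, prod_ite, prod_const, prod_const, filter_not, card_univ_sdiff,
    Fintype.card_fin]

lemma sum_bernoulliWeight_mul_eq_eval_bernsteinOp (q : ℝ) (h : ℕ → ℝ) :
    ∑ s : Fin L → Bool, bernoulliWeight q s * h #{i | s i = true} =
      (bernsteinOp L h).eval q := by
  let e : (Fin L → Bool) ≃ Finset (Fin L) :=
    { toFun s := {i | s i = true}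
      invFun A i := decide (i ∈ A)
      left_inv s := by ext; simp
      right_inv A := by ext; simp }
  simp only [bernoulliWeight_eq_pow_mul_pow]
  refine (Fintype.sum_equiv e _ (fun A => q ^ #A * (1 - q) ^ (L - #A) * h #A)
    fun _ => rfl).trans ?_
  rw [← powerset_univ, sum_powerset_apply_card fun k => q ^ k * (1 - q) ^ (L - k) * h k,
    card_univ, Fintype.card_fin, bernsteinOp, eval_finsetSum]
  refine sum_congr rfl fun k _ => ?_
  simp only [eval_smul, bernsteinPolynomial, eval_mul, eval_pow, eval_sub, eval_one, eval_X,
    eval_natCast, nsmul_eq_mul, smul_eq_mul]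
  ring

lemma card_filter_eq_false (s : Fin L → Bool) :
    #{i | s i = false} = L - #{i | s i = true} := by
  have h := card_filter_add_card_filter_not (s := univ) fun i => s i = true
  simp only [Bool.not_eq_true, card_univ, Fintype.card_fin] at h
  omega

end BitStrings

/-- `τ_{Unif,q}` of the paper: the expected uniform mean radius of `L` i.i.d. `Ber(q)` bits. -/
noncomputable def tauUnif (L : ℕ) (q : ℝ) : ℝ :=
  ∑ s : Fin L → Bool,
    bernoulliWeight q s * ((min #{i | s i = false} #{i | s i = true} : ℕ) : ℝ) / L

lemma tauUnif_one_sub (L : ℕ) (q : ℝ) : tauUnif L (1 - q) = tauUnif L q := by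
  have hinv : Function.Involutive fun s : Fin L → Bool => fun i => !s i :=
    fun s => by ext; simp
  refine Fintype.sum_bijective _ hinv.bijective _ _ fun s => ?_
  simp only [bernoulliWeight_one_sub, Bool.not_eq_false', Bool.not_eq_true', min_comm]

lemma tauUnif_eq_eval (L : ℕ) (q : ℝ) :
    tauUnif L q = (bernsteinOp L fun k => ((min (L - k) k : ℕ) : ℝ) / L).eval q := by
  rw [← sum_bernoulliWeight_mul_eq_eval_bernsteinOp, tauUnif]
  simp only [card_filter_eq_false, mul_div_assoc]

lemma concaveOn_tauUnif (L : ℕ) : ConcaveOn ℝ (Set.Icc 0 1) (tauUnif L) := by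
  rw [funext (tauUnif_eq_eval L)]
  refine concaveOn_eval_bernsteinOp L fun k hk => ?_
  have hmin : min (L - (k + 1 + 1)) (k + 1 + 1) + min (L - k) k ≤
      2 * min (L - (k + 1)) (k + 1) := by omega
  have hconc : ∀ a b c : ℝ, a + c ≤ 2 * b → a / L - b / L - (b / L - c / L) ≤ 0 :=
    fun a b c h => by
      rw [show a / L - b / L - (b / L - c / L) = (a + c - 2 * b) / L by ring]
      exact div_nonpos_of_nonpos_of_nonneg (by linarith) (Nat.cast_nonneg L)
  exact hconc _ _ _ (by exact_mod_cast hmin)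

lemma sum_bernoulliWeight_mul_minorityWeight_le_tauUnif {L : ℕ} {q : ℝ}
    (hq : q ∈ Set.Icc (0 : ℝ) 1) {ω : Fin L → ℝ} (hω : ∑ i, ω i = 1) :
    ∑ s, bernoulliWeight q s * minorityWeight ω s ≤ tauUnif L q := by
  have hL : (0 : ℝ) < L := Nat.cast_pos.2 (Nat.pos_of_ne_zero (by rintro rfl; simp at hω))
  have h := (isExchangeable_bernoulliWeight q).mul_sum_mul_minorityWeight_le
    (bernoulliWeight_nonneg hq) hω
  have hτ : ∑ s : Fin L → Bool, bernoulliWeight q s * minorityWeight (fun _ => 1) s =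
      L * tauUnif L q := by
    simp [tauUnif, minorityWeight, mul_sum, mul_div_cancel₀ _ hL.ne']
  exact le_of_mul_le_mul_left (h.trans_eq hτ) hL

section Codes

variable {α : Type*} [Fintype α] [Nonempty α] {n L : ℕ}

lemma card_filter_decide_eq (P : α → Prop) [DecidablePred P] (b : Bool) :
    (#{a | decide (P a) = b} : ℝ) =
      Fintype.card α * if b then (#{a | P a} : ℝ) / Fintype.card α
        else 1 - (#{a | P a} : ℝ) / Fintype.card α := by
  have hα : (Fintype.card α : ℝ) ≠ 0 := Nat.cast_ne_zero.2 Fintype.card_ne_zero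
  have h := card_filter_add_card_filter_not (s := (univ : Finset α)) P
  rw [card_univ] at h
  cases b
  · simp only [decide_eq_false_iff_not, Bool.false_eq_true, if_false, mul_sub, mul_one,
      mul_div_cancel₀ _ hα]
    rw [eq_sub_iff_add_eq, add_comm]
    exact_mod_cast h
  · simp [mul_div_cancel₀ _ hα]

lemma sum_comp_decide_eq_card_pow_mul (P : α → Prop) [DecidablePred P]
    (Φ : (Fin L → Bool) → ℝ) :
    ∑ w : Fin L → α, Φ (fun i => decide (P (w i))) =
      Fintype.card α ^ L *
        ∑ s, bernoulliWeight (#{a | P a} / Fintype.card α) s * Φ s := by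
  classical
  rw [← sum_fiberwise univ (fun w i => decide (P (w i))), mul_sum]
  refine sum_congr rfl fun s _ => ?_
  have hfiber : ({w | (fun i => decide (P (w i))) = s} : Finset (Fin L → α)) =
      Fintype.piFinset fun i => {a | decide (P a) = s i} := by
    ext w; simp [funext_iff]
  rw [sum_congr rfl fun w hw => by rw [(mem_filter.1 hw).2], sum_const, hfiber,
    Fintype.card_piFinset, nsmul_eq_mul, bernoulliWeight, ← mul_assoc]
  push_cast
  simp only [card_filter_decide_eq P, prod_mul_distrib, prod_const, card_univ, Fintype.card_fin]

lemma min_le_mean_abs_sub {x : α → ℝ}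
    (hx : ∀ a, x a = 0 ∨ x a = 1) {y : ℝ} (hy : 0 ≤ y ∧ y ≤ 1) :
    min (#{a | x a = 1} / Fintype.card α : ℝ) (1 - #{a | x a = 1} / Fintype.card α) ≤
      (∑ a, |x a - y|) / Fintype.card α := by
  set q : ℝ := #{a | x a = 1} / Fintype.card α
  have hα : (Fintype.card α : ℝ) ≠ 0 := Nat.cast_ne_zero.2 Fintype.card_ne_zero
  have hcard := card_filter_add_card_filter_not (s := (univ : Finset α)) fun a => x a = 1
  rw [card_univ] at hcard
  have hsum : (∑ a, |x a - y|) / Fintype.card α = q * (1 - y) + (1 - q) * y := by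
    have habs : ∀ a, |x a - y| = if x a = 1 then 1 - y else y := fun a => by
      rcases hx a with h | h <;> simp [h, abs_of_nonneg, abs_of_nonpos, hy.1, hy.2]
    have hq : 1 - q = #{a | ¬ x a = 1} / Fintype.card α := by
      rw [eq_div_iff hα, sub_mul, div_mul_cancel₀ _ hα, one_mul, sub_eq_iff_eq_add',
        ← Nat.cast_add, hcard]
    rw [hq, sum_congr rfl fun a _ => habs a, sum_ite, sum_const, sum_const, nsmul_eq_mul,
      nsmul_eq_mul]
    ring
  rw [hsum]
  nlinarith [min_le_left q (1 - q), min_le_right q (1 - q)]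

/-- `mrad_ω` of the paper, for the rows `x i` of `x`. -/
noncomputable def meanRadius (ω : Fin L → ℝ) (x : Fin L → Fin n → ℝ) : ℝ :=
  ⨅ y : {y : Fin n → ℝ // ∀ j, 0 ≤ y j ∧ y j ≤ 1},
    ∑ i, ω i * ((1 / n : ℝ) * ∑ j, |x i j - y.1 j|)

lemma exists_sum_mul_abs_sub_eq_minorityWeight (ω : Fin L → ℝ) {x : Fin L → ℝ}
    (hx : ∀ i, x i = 0 ∨ x i = 1) :
    ∃ t : ℝ, (0 ≤ t ∧ t ≤ 1) ∧
      ∑ i, ω i * |x i - t| = minorityWeight ω fun i => decide (x i = 1) := by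
  have hbit : ∀ b : Bool, ∑ i, ω i * |x i - if b then 1 else 0| =
      ∑ i with decide (x i = 1) = !b, ω i := fun b => by
    rw [sum_filter]
    exact sum_congr rfl fun i _ => by rcases hx i with h | h <;> cases b <;> simp [h]
  rw [minorityWeight]
  by_cases h :
      ∑ i with decide (x i = 1) = false, ω i ≤ ∑ i with decide (x i = 1) = true, ω i
  · exact ⟨1, by norm_num, by rw [min_eq_left h]; simpa using hbit true⟩
  · exact ⟨0, by norm_num, by rw [min_eq_right (not_le.1 h).le]; simpa using hbit false⟩

lemma meanRadius_le_sum_minorityWeight {ω : Fin L → ℝ} (hω0 : ∀ i, 0 ≤ ω i)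
    {x : Fin L → Fin n → ℝ} (hx : ∀ i j, x i j = 0 ∨ x i j = 1) :
    meanRadius ω x ≤ (1 / n : ℝ) * ∑ j, minorityWeight ω fun i => decide (x i j = 1) := by
  choose t ht hsum using fun j => exists_sum_mul_abs_sub_eq_minorityWeight ω (hx · j)
  have hbdd : BddBelow (Set.range fun y : {y : Fin n → ℝ // ∀ j, 0 ≤ y j ∧ y j ≤ 1} =>
      ∑ i, ω i * ((1 / n : ℝ) * ∑ j, |x i j - y.1 j|)) :=
    ⟨0, Set.forall_mem_range.2 fun y => sum_nonneg fun i _ =>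
      mul_nonneg (hω0 i) (mul_nonneg (by positivity) (sum_nonneg fun j _ => abs_nonneg _))⟩
  refine (ciInf_le hbdd ⟨t, ht⟩).trans_eq ?_
  simp only [← hsum, mul_sum, mul_left_comm (ω _)]
  exact sum_comm

lemma sum_meanRadius_le {ω : Fin L → ℝ}
    (hω0 : ∀ i, 0 ≤ ω i) {x : α → Fin n → ℝ} (hx : ∀ a j, x a j = 0 ∨ x a j = 1) :
    (1 / (Fintype.card α : ℝ) ^ L) * ∑ w : Fin L → α, meanRadius ω (fun i => x (w i)) ≤
      ∑ j, (1 / n : ℝ) * ∑ s,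
        bernoulliWeight (#{a | x a j = 1} / Fintype.card α) s * minorityWeight ω s := by
  have hα : (Fintype.card α : ℝ) ^ L ≠ 0 :=
    pow_ne_zero _ (Nat.cast_ne_zero.2 Fintype.card_ne_zero)
  calc _ ≤ (1 / (Fintype.card α : ℝ) ^ L) * ∑ w : Fin L → α,
        (1 / n : ℝ) * ∑ j, minorityWeight ω fun i => decide (x (w i) j = 1) := by
        gcongr with w
        exact meanRadius_le_sum_minorityWeight hω0 fun i j => hx (w i) j
    _ = ∑ j, (1 / n : ℝ) * ((1 / (Fintype.card α : ℝ) ^ L) * ∑ w : Fin L → α,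
        minorityWeight ω fun i => decide (x (w i) j = 1)) := by
        simp only [mul_sum]
        rw [sum_comm]
        exact sum_congr rfl fun j _ => sum_congr rfl fun w _ => by ring
    _ = _ := sum_congr rfl fun j _ => by
        rw [sum_comp_decide_eq_card_pow_mul (fun a => x a j = 1), one_div (_ ^ L),
          inv_mul_cancel_left₀ hα]

lemma sum_mul_min_le_of_forall_mean_abs_sub_le (hn : 0 < n) {x : α → Fin n → ℝ}
    (hx : ∀ a j, x a j = 0 ∨ x a j = 1) {y : Fin n → ℝ}
    (hy : ∀ j, 0 ≤ y j ∧ y j ≤ 1) {p : ℝ}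
    (hp : ∀ a, (1 / n : ℝ) * ∑ j, |x a j - y j| ≤ p) :
    ∑ j, (1 / n : ℝ) * min (#{a | x a j = 1} / Fintype.card α : ℝ)
      (1 - #{a | x a j = 1} / Fintype.card α) ≤ p := by
  have hα : (0 : ℝ) < Fintype.card α := Nat.cast_pos.2 Fintype.card_pos
  calc _ ≤ ∑ j, (1 / n : ℝ) * ((∑ a, |x a j - y j|) / Fintype.card α) := by
        gcongr with j
        exact min_le_mean_abs_sub (hx · j) (hy j)
    _ = (∑ a, (1 / n : ℝ) * ∑ j, |x a j - y j|) / Fintype.card α := by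
        simp only [mul_sum, sum_div]
        rw [sum_comm]
        exact sum_congr rfl fun j _ => sum_congr rfl fun a _ => by ring
    _ ≤ (∑ _a : α, p) / Fintype.card α := by gcongr with a; exact hp a
    _ = p := by rw [sum_const, card_univ, nsmul_eq_mul, mul_div_cancel_left₀ _ hα.ne']

end Codes

theorem stmt_8_general (n L : ℕ) (hn : 0 < n)
    (C : Finset (Fin n → ℝ)) (hCne : C.Nonempty)
    (hbin : ∀ c ∈ C, ∀ j, c j = 0 ∨ c j = 1)
    (p : ℝ) (hp0 : 0 ≤ p) (hp : p ≤ 1 / 2)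
    (hrad : ∃ y : Fin n → ℝ, (∀ j, 0 ≤ y j ∧ y j ≤ 1) ∧
      ∀ c ∈ C, (1 / n : ℝ) * ∑ j, |c j - y j| ≤ p)
    (ω : Fin L → ℝ) (hω0 : ∀ i, 0 ≤ ω i) (hω1 : ∑ i, ω i = 1) :
    (1 / (C.card : ℝ) ^ L) * ∑ w : Fin L → {c // c ∈ C},
        (⨅ y : {y : Fin n → ℝ // ∀ j, 0 ≤ y j ∧ y j ≤ 1},
          ∑ i, ω i * ((1 / n : ℝ) * ∑ j, |(w i : Fin n → ℝ) j - y.1 j|))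
      ≤ ∑ s : Fin L → Bool, (∏ i, if s i then p else 1 - p) *
          ((min (Finset.univ.filter fun i => s i = false).card
                (Finset.univ.filter fun i => s i = true).card : ℕ) : ℝ) / L := by
  obtain ⟨y, hy, hyC⟩ := hrad
  have := hCne.to_subtype
  have hx : ∀ (c : {c // c ∈ C}) j, c.1 j = 0 ∨ c.1 j = 1 := fun c => hbin c c.2
  set q : Fin n → ℝ := fun j => #{c : {c // c ∈ C} | c.1 j = 1} / Fintype.card {c // c ∈ C}
  have hq : ∀ j, q j ∈ Set.Icc (0 : ℝ) 1 := fun j =>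
    ⟨by positivity, div_le_one_of_le₀ (Nat.cast_le.2 (card_le_univ _)) (Nat.cast_nonneg _)⟩
  calc _ = (1 / (Fintype.card {c // c ∈ C} : ℝ) ^ L) *
          ∑ w : Fin L → {c // c ∈ C}, meanRadius ω fun i => (w i).1 := by
        rw [Fintype.card_coe]; rfl
    _ ≤ ∑ j, (1 / n : ℝ) * ∑ s, bernoulliWeight (q j) s * minorityWeight ω s :=
        sum_meanRadius_le hω0 hx
    _ ≤ ∑ j, (1 / n : ℝ) * tauUnif L (q j) := by
        gcongr with j
        exact sum_bernoulliWeight_mul_minorityWeight_le_tauUnif (hq j) hω1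
    _ ≤ tauUnif L p :=
        (concaveOn_tauUnif L).sum_mul_le_of_sum_mul_min_le (tauUnif_one_sub L)
          (fun _ => by positivity) (by simp [hn.ne']) hq ⟨hp0, hp⟩
          (sum_mul_min_le_of_forall_mean_abs_sub_le hn hx hy fun c => hyC c c.2)

/-- if a binary code `C` has radius at most `p ≤ 1/2`, then for any
probability measure `ω` on `{1,…,L}`, the expected mean radius of `L`
independent uniform codewords is at most `τ_{Unif,p}`, the expected uniform mean
radius of `L` i.i.d. `Ber(p)` strings (here `s i = true` encodes bit `1`). -/
theorem stmt_8 (n L : ℕ) (hn : 0 < n) (hL : 0 < L)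
    (C : Finset (Fin n → ℝ)) (hCne : C.Nonempty)
    (hbin : ∀ c ∈ C, ∀ j, c j = 0 ∨ c j = 1)
    (p : ℝ) (hp0 : 0 ≤ p) (hp : p ≤ 1 / 2)
    (hrad : ∃ y : Fin n → ℝ, (∀ j, 0 ≤ y j ∧ y j ≤ 1) ∧
      ∀ c ∈ C, (1 / n : ℝ) * ∑ j, |c j - y j| ≤ p)
    (ω : Fin L → ℝ) (hω0 : ∀ i, 0 ≤ ω i) (hω1 : ∑ i, ω i = 1) :
    (1 / (C.card : ℝ) ^ L) * ∑ w : Fin L → {c // c ∈ C},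
        (⨅ y : {y : Fin n → ℝ // ∀ j, 0 ≤ y j ∧ y j ≤ 1},
          ∑ i, ω i * ((1 / n : ℝ) * ∑ j, |(w i : Fin n → ℝ) j - y.1 j|))
      ≤ ∑ s : Fin L → Bool, (∏ i, if s i then p else 1 - p) *
          ((min (Finset.univ.filter fun i => s i = false).card
                (Finset.univ.filter fun i => s i = true).card : ℕ) : ℝ) / L :=
  stmt_8_general n L hn C hCne hbin p hp0 hp hrad ω hω0 hω1
end

section
/- Let π: ℝ^n → ℝ^m be the projection onto a subset A of m coordinates, and let C ⊆ {0,1}^n be such that rad(π(C)) ≤ 1/2 − ε with respect to the normalized ℓ1-norm on the m coordinates. Then there exists C′ ⊆ C with |C′| ≥ |C|/2 and rad(C′) ≤ 1/2 − (m/n)ε. -/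
/-!
On the coordinates outside `A`, every codeword is within normalized ℓ¹-distance `1/2` of the
constant vector given by its majority bit. At least half of `C` shares the same majority bit `v`,
and for those codewords the center of the projected code, extended by `v` outside `A`, is at
ℓ¹-distance at most `#A (1/2 - ε) + (n - #A)/2 = n (1/2 - (#A/n) ε)`.
-/

open Finset

variable {ι : Type*}

noncomputable def majorityBit (s : Finset ι) (c : ι → ℝ) : ℝ :=
  if ∑ j ∈ s, c j ≤ #s / 2 then 0 else 1

lemma majorityBit_eq_zero_or_one (s : Finset ι) (c : ι → ℝ) :
    majorityBit s c = 0 ∨ majorityBit s c = 1 := by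
  unfold majorityBit; split_ifs <;> simp

lemma sum_abs_sub_majorityBit_le {s : Finset ι} {c : ι → ℝ} (hc : ∀ j ∈ s, c j ∈ Set.Icc 0 1) :
    ∑ j ∈ s, |c j - majorityBit s c| ≤ #s / 2 := by
  unfold majorityBit
  split_ifs with h
  · calc ∑ j ∈ s, |c j - 0| = ∑ j ∈ s, c j :=
          sum_congr rfl fun j hj => by rw [sub_zero, abs_of_nonneg (hc j hj).1]
      _ ≤ #s / 2 := h
  · calc ∑ j ∈ s, |c j - 1| = ∑ j ∈ s, (1 - c j) :=
          sum_congr rfl fun j hj => by rw [abs_sub_comm, abs_of_nonneg (sub_nonneg.2 (hc j hj).2)]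
      _ ≤ #s / 2 := by rw [sum_sub_distrib, sum_const, nsmul_one]; linarith

lemma exists_card_le_two_mul_card_fiber {α β : Type*} [DecidableEq β] {C : Finset α} {f : α → β}
    {a b : β} (hf : ∀ x ∈ C, f x = a ∨ f x = b) :
    ∃ v, (v = a ∨ v = b) ∧ #C ≤ 2 * #{x ∈ C | f x = v} := by
  have hsplit := card_filter_add_card_filter_not (s := C) (fun x => f x = a)
  have hrest : #{x ∈ C | ¬f x = a} ≤ #{x ∈ C | f x = b} :=
    card_le_card fun x hx => by
      rw [mem_filter] at hx ⊢
      exact ⟨hx.1, (hf x hx.1).resolve_left hx.2⟩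
  by_cases h : #C ≤ 2 * #{x ∈ C | f x = a}
  · exact ⟨a, .inl rfl, h⟩
  · exact ⟨b, .inr rfl, by omega⟩

lemma sum_abs_sub_piecewise [Fintype ι] [DecidableEq ι] (A : Finset ι) (c y z : ι → ℝ) :
    ∑ j, |c j - A.piecewise y z j| = ∑ j ∈ A, |c j - y j| + ∑ j ∈ Aᶜ, |c j - z j| := by
  rw [← sum_add_sum_compl A]
  congr 1
  · exact sum_congr rfl fun j hj => by rw [piecewise_eq_of_mem _ _ _ hj]
  · exact sum_congr rfl fun j hj => by rw [piecewise_eq_of_notMem _ _ _ (mem_compl.1 hj)]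

lemma sum_le_card_mul_of_one_div_card_mul_sum_le {s : Finset ι} {g : ι → ℝ} {r : ℝ}
    (h : 1 / (#s : ℝ) * ∑ j ∈ s, g j ≤ r) : ∑ j ∈ s, g j ≤ #s * r := by
  rcases s.eq_empty_or_nonempty with rfl | hs
  · simp
  · rwa [one_div, inv_mul_le_iff₀ (by exact_mod_cast hs.card_pos)] at h

/-- if the projection of a binary code `C` to a set `A` of `m`
coordinates has radius at most `1/2 - ε`, then half of `C` has radius at most
`1/2 - (m/n)ε`. -/
theorem stmt_10 (n : ℕ) (hn : 0 < n) (A : Finset (Fin n)) (ε : ℝ)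
    (C : Finset (Fin n → ℝ))
    (hbin : ∀ c ∈ C, ∀ j, c j = 0 ∨ c j = 1)
    (hproj : ∃ y : Fin n → ℝ, (∀ j, 0 ≤ y j ∧ y j ≤ 1) ∧
      ∀ c ∈ C, (1 / (A.card : ℝ)) * ∑ j ∈ A, |c j - y j| ≤ 1 / 2 - ε) :
    ∃ C' ⊆ C, (C.card : ℝ) ≤ 2 * C'.card ∧
      ∃ y : Fin n → ℝ, (∀ j, 0 ≤ y j ∧ y j ≤ 1) ∧
        ∀ c ∈ C', (1 / n : ℝ) * ∑ j, |c j - y j| ≤ 1 / 2 - ((A.card : ℝ) / n) * ε := by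
  obtain ⟨y, hy, hyC⟩ := hproj
  obtain ⟨v, hv, hcard⟩ := exists_card_le_two_mul_card_fiber (C := C) (f := majorityBit Aᶜ)
    fun c _ => majorityBit_eq_zero_or_one Aᶜ c
  refine ⟨{c ∈ C | majorityBit Aᶜ c = v}, filter_subset _ _, by exact_mod_cast hcard,
    A.piecewise y fun _ => v, fun j => ?_, fun c hc => ?_⟩
  · by_cases hj : j ∈ A
    · simpa [hj] using hy j
    · rcases hv with rfl | rfl <;> simp [hj]
  obtain ⟨hcC, rfl⟩ := mem_filter.1 hc
  have hA := sum_le_card_mul_of_one_div_card_mul_sum_le (hyC c hcC)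
  have hAc := sum_abs_sub_majorityBit_le (s := Aᶜ) (c := c) fun j _ => by
    rcases hbin c hcC j with h | h <;> simp [h]
  have hcompl : (#Aᶜ : ℝ) + #A = n := by
    exact_mod_cast (card_compl_add_card A).trans (Fintype.card_fin n)
  rw [sum_abs_sub_piecewise, one_div, inv_mul_le_iff₀ (by exact_mod_cast hn), mul_sub,
    ← mul_assoc, mul_div_cancel₀ _ (by positivity)]
  linarith
end

section
/- There exists a finite set Ω′_L of probability measures on {1,…,L}, with |Ω′_L| ≤ 4^{L²}, such that for every n and every L-tuple x ∈ ({0,1}^n)^L we have rad(x) = max over ω ∈ Ω′_L of mrad_ω(x). -/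
/-!
The payoff `(y, ω) ↦ E_{i∼ω} ‖x⁽ⁱ⁾ - y‖` is convex in `y` and linear in `ω`, so Sion's minimax
theorem gives a probability vector `ω` with `rad x ≤ mrad_ω x`. For binary words, rounding each
coordinate of `y` to the side of `1/2` on which the column mass `∑_{i : x⁽ⁱ⁾_j = 1} ω i` lies is
optimal, so on the polytope of weights whose column masses stay on those sides `mrad_ω x` is the
linear function `ω ↦ E_{i∼ω} ‖x⁽ⁱ⁾ - y‖` and is maximised at an extreme point. There the tight
constraints among `ω i = 0`, `∑ i, ω i = 1` and `∑_{i ∈ T} ω i = 1/2` determine `ω`, and already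
`L` of them do, which leaves at most `(2^L + L + 1)^L ≤ 4^(L²)` candidate weights.
-/

open Finset Module Filter Topology

theorem exists_fin_finrank_forall_eq_zero {K V ι : Type*} [Field K] [AddCommGroup V]
    [Module K V] [FiniteDimensional K V] (φ : ι → Dual K V)
    (hφ : ∀ v, (∀ i, φ i v = 0) → v = 0) :
    ∃ g : Fin (finrank K V) → ι, ∀ v, (∀ k, φ (g k) v = 0) → v = 0 := by
  obtain ⟨f, hf_mem, hf_span, -⟩ := Submodule.exists_fun_fin_finrank_span_eq K (Set.range φ)
  have hW : (Submodule.span K (Set.range f)).dualCoannihilator = ⊥ := eq_bot_iff.2 fun v hv =>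
    hφ v fun i => (Submodule.mem_dualCoannihilator v).1 hv _
      (by rw [hf_span]; exact Submodule.subset_span ⟨i, rfl⟩)
  have hrank : finrank K V = finrank K (Submodule.span K (Set.range φ)) := by
    have := Subspace.finrank_add_finrank_dualCoannihilator_eq (Submodule.span K (Set.range f))
    rwa [hW, finrank_bot, add_zero, hf_span, eq_comm] at this
  choose g hg using hf_mem
  refine ⟨g ∘ Fin.cast hrank, fun v hv => hW.le ((Submodule.mem_dualCoannihilator v).2 ?_)⟩
  refine fun ψ hψ => Submodule.span_induction (p := fun ψ _ => ψ v = 0) ?_ (by simp)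
    (fun _ _ _ _ h₁ h₂ => by simp [h₁, h₂]) (fun _ _ _ h => by simp [h]) hψ
  rintro _ ⟨k, rfl⟩
  simpa [hg] using hv (Fin.cast hrank.symm k)

theorem eventually_nonneg_add_mul {p q : ℝ} (hp : 0 ≤ p) (hq : p = 0 → q = 0) :
    ∀ᶠ t in 𝓝 (0 : ℝ), 0 ≤ p + t * q := by
  rcases hp.eq_or_lt with rfl | hp
  · simp [hq rfl]
  · have : Tendsto (fun t => p + t * q) (𝓝 0) (𝓝 p) := by
      simpa using ((tendsto_id (x := 𝓝 (0 : ℝ))).mul_const q).const_add p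
    exact (this.eventually (lt_mem_nhds hp)).mono fun _ => le_of_lt

theorem eq_zero_of_mem_extremePoints {E : Type*} [AddCommGroup E] [Module ℝ E] {s : Set E}
    {e v : E} (he : e ∈ s.extremePoints ℝ) (hv : ∀ᶠ t in 𝓝 (0 : ℝ), e + t • v ∈ s) : v = 0 := by
  have hv' : ∀ᶠ t in 𝓝 (0 : ℝ), e + (-t) • v ∈ s :=
    (continuous_neg.tendsto' (0 : ℝ) 0 neg_zero).eventually hv
  obtain ⟨t, ⟨h₁, h₂⟩, ht⟩ :=
    (((hv.and hv').filter_mono nhdsWithin_le_nhds).and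
      (self_mem_nhdsWithin (s := Set.Ioi 0))).exists
  have : e + t • v = e :=
    he.2 h₁ h₂ ⟨1 / 2, 1 / 2, by norm_num, by norm_num, by norm_num, by module⟩
  simpa [ne_of_gt ht] using this

theorem IsCompact.exists_mem_extremePoints_le {E : Type*} [AddCommGroup E] [Module ℝ E]
    [TopologicalSpace E] [T2Space E] [IsTopologicalAddGroup E] [ContinuousSMul ℝ E]
    [LocallyConvexSpace ℝ E] {s : Set E} (hs : IsCompact s) (l : StrongDual ℝ E) {x : E}
    (hx : x ∈ s) : ∃ e ∈ s.extremePoints ℝ, l x ≤ l e := by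
  have h : IsExposed ℝ s {y ∈ s | ∀ z ∈ s, l z ≤ l y} := fun _ => ⟨l, rfl⟩
  obtain ⟨z, hzs, hz⟩ := hs.exists_isMaxOn ⟨x, hx⟩ l.continuous.continuousOn
  obtain ⟨e, he⟩ := (h.isCompact hs).extremePoints_nonempty ⟨z, hzs, hz⟩
  exact ⟨e, h.isExtreme.extremePoints_subset_extremePoints he, he.1.2 x hx⟩

theorem Real.biSup_eq_of_forall_le_of_exists_le {α : Type*} {s : Finset α} {f : α → ℝ} {r : ℝ}
    (hr : 0 ≤ r) (hle : ∀ a ∈ s, f a ≤ r) (hge : ∃ a ∈ s, r ≤ f a) : ⨆ a ∈ s, f a = r := by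
  have hbdd : ∀ a, ⨆ _ : a ∈ s, f a ≤ r := fun a => Real.iSup_le (hle a) hr
  obtain ⟨a, ha, hra⟩ := hge
  refine le_antisymm (Real.iSup_le hbdd hr) ?_
  calc r ≤ ⨆ _ : a ∈ s, f a := by rwa [ciSup_pos ha]
    _ ≤ _ := le_ciSup ⟨r, Set.forall_mem_range.2 hbdd⟩ a

namespace BinaryRadius

variable {L : ℕ}

/-- `inl T` is the hyperplane `∑_{i ∈ T} ω i = 1/2` (on the simplex, the paper's
`∑_{i ∉ T} ω i = ∑_{i ∈ T} ω i`), `inr (some i)` is `ω i = 0` and `inr none` is `∑ i, ω i = 1`. -/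
abbrev Facet (L : ℕ) := Finset (Fin L) ⊕ Option (Fin L)

def Facet.row : Facet L → Dual ℝ (Fin L → ℝ)
  | .inl T => ∑ i ∈ T, LinearMap.proj i
  | .inr (some i) => LinearMap.proj i
  | .inr none => ∑ i, LinearMap.proj i

@[simp] noncomputable def Facet.level : Facet L → ℝ
  | .inl _ => 1 / 2
  | .inr (some _) => 0
  | .inr none => 1

@[simp] theorem Facet.row_inl (T : Finset (Fin L)) (ω : Fin L → ℝ) :
    Facet.row (.inl T) ω = ∑ i ∈ T, ω i := by
  simp [Facet.row]

@[simp] theorem Facet.row_some (i : Fin L) (ω : Fin L → ℝ) :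
    Facet.row (.inr (some i)) ω = ω i := rfl

@[simp] theorem Facet.row_none (ω : Fin L → ℝ) : Facet.row (.inr none) ω = ∑ i, ω i := by
  simp [Facet.row]

def vertices (L : ℕ) : Set (Fin L → ℝ) :=
  {ω | ω ∈ stdSimplex ℝ (Fin L) ∧
    ∀ v, (∀ c : Facet L, c.row ω = c.level → c.row v = 0) → v = 0}

theorem exists_injOn_vertices :
    ∃ G : (Fin L → ℝ) → Fin (finrank ℝ (Fin L → ℝ)) → Facet L, Set.InjOn G (vertices L) := by
  have key : ∀ ω ∈ vertices L, ∃ g : Fin (finrank ℝ (Fin L → ℝ)) → Facet L,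
      (∀ k, (g k).row ω = (g k).level) ∧ ∀ v, (∀ k, (g k).row v = 0) → v = 0 := by
    rintro ω ⟨-, hω⟩
    obtain ⟨g, hg⟩ := exists_fin_finrank_forall_eq_zero
      (fun c : {c : Facet L // c.row ω = c.level} => c.1.row)
      fun v hv => hω v fun c hc => hv ⟨c, hc⟩
    exact ⟨fun k => (g k).1, fun k => (g k).2, hg⟩
  choose! G hG_tight hG_det using key
  refine ⟨G, fun ω₁ h₁ ω₂ h₂ hG => sub_eq_zero.1 (hG_det ω₁ h₁ _ fun k => ?_)⟩
  rw [map_sub, hG_tight ω₁ h₁, hG, hG_tight ω₂ h₂, sub_self]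

theorem vertices_finite (L : ℕ) : (vertices L).Finite :=
  let ⟨_, hG⟩ := exists_injOn_vertices (L := L)
  Set.Finite.of_injOn (Set.mapsTo_univ _ _) hG Set.finite_univ

theorem card_toFinset_vertices_le (L : ℕ) : (vertices_finite L).toFinset.card ≤ 4 ^ L ^ 2 := by
  obtain ⟨G, hG⟩ := exists_injOn_vertices (L := L)
  calc (vertices_finite L).toFinset.card ≤ (univ : Finset (Fin _ → Facet L)).card :=
        card_le_card_of_injOn G (fun _ _ => mem_univ _) (by simpa using hG)
    _ = (2 ^ L + (L + 1)) ^ L := by simp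
    _ ≤ (2 ^ (L + 1)) ^ L := by
        gcongr; have := Nat.lt_two_pow_self (n := L); rw [pow_succ]; omega
    _ = 2 ^ (L + L ^ 2) := by ring
    _ ≤ 2 ^ (2 * L ^ 2) := Nat.pow_le_pow_right two_pos (by nlinarith)
    _ = 4 ^ L ^ 2 := by rw [pow_mul]; norm_num

variable {n : ℕ}

noncomputable def l1Dist (u y : Fin n → ℝ) : ℝ := (1 / n : ℝ) * ∑ j, |u j - y j|

noncomputable def avgDist (x : Fin L → Fin n → ℝ) (ω : Fin L → ℝ) (y : Fin n → ℝ) : ℝ :=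
  ∑ i, ω i * l1Dist (x i) y

abbrev UnitCube (n : ℕ) := {y : Fin n → ℝ // ∀ j, 0 ≤ y j ∧ y j ≤ 1}

instance : Nonempty (UnitCube n) := ⟨⟨0, fun _ => ⟨le_rfl, zero_le_one⟩⟩⟩

noncomputable def rad (x : Fin L → Fin n → ℝ) : ℝ :=
  ⨅ y : UnitCube n, ⨆ i, l1Dist (x i) y.1

noncomputable def mrad (x : Fin L → Fin n → ℝ) (ω : Fin L → ℝ) : ℝ :=
  ⨅ y : UnitCube n, avgDist x ω y.1

theorem l1Dist_nonneg (u y : Fin n → ℝ) : 0 ≤ l1Dist u y := by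
  unfold l1Dist; positivity

theorem rad_nonneg (x : Fin L → Fin n → ℝ) : 0 ≤ rad x :=
  Real.iInf_nonneg fun _ => Real.iSup_nonneg fun _ => l1Dist_nonneg _ _

theorem avgDist_nonneg (x : Fin L → Fin n → ℝ) {ω : Fin L → ℝ} (hω : ∀ i, 0 ≤ ω i)
    (y : Fin n → ℝ) : 0 ≤ avgDist x ω y :=
  sum_nonneg fun i _ => mul_nonneg (hω i) (l1Dist_nonneg _ _)

theorem bddBelow_range_avgDist (x : Fin L → Fin n → ℝ) {ω : Fin L → ℝ} (hω : ∀ i, 0 ≤ ω i) :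
    BddBelow (Set.range fun y : UnitCube n => avgDist x ω y) :=
  ⟨0, Set.forall_mem_range.2 fun _ => avgDist_nonneg x hω _⟩

theorem avgDist_le_iSup (x : Fin L → Fin n → ℝ) {ω : Fin L → ℝ} (hω : ω ∈ stdSimplex ℝ (Fin L))
    (y : Fin n → ℝ) : avgDist x ω y ≤ ⨆ i, l1Dist (x i) y :=
  calc avgDist x ω y ≤ ∑ i, ω i * ⨆ i, l1Dist (x i) y :=
        sum_le_sum fun i _ => mul_le_mul_of_nonneg_left
          (le_ciSup (f := fun i => l1Dist (x i) y) (Finite.bddAbove_range _) i) (hω.1 i)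
    _ = ⨆ i, l1Dist (x i) y := by rw [← sum_mul, hω.2, one_mul]

theorem mrad_le_rad (x : Fin L → Fin n → ℝ) {ω : Fin L → ℝ} (hω : ω ∈ stdSimplex ℝ (Fin L)) :
    mrad x ω ≤ rad x :=
  ciInf_mono (bddBelow_range_avgDist x hω.1) fun y => avgDist_le_iSup x hω y.1

theorem avgDist_single (x : Fin L → Fin n → ℝ) (i : Fin L) (y : Fin n → ℝ) :
    avgDist x (Pi.single i 1) y = l1Dist (x i) y := by
  simp [avgDist, Pi.single_apply]

theorem convexOn_avgDist (x : Fin L → Fin n → ℝ) {ω : Fin L → ℝ} (hω : ∀ i, 0 ≤ ω i) :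
    ConvexOn ℝ Set.univ (avgDist x ω) := by
  refine ⟨convex_univ, fun y _ z _ a b ha hb hab => ?_⟩
  have key (u v w : ℝ) : |u - (a * v + b * w)| ≤ a * |u - v| + b * |u - w| :=
    calc |u - (a * v + b * w)| = |a * (u - v) + b * (u - w)| := by
          congr 1; linear_combination (-u) * hab
      _ ≤ a * |u - v| + b * |u - w| := by
          simpa [abs_mul, abs_of_nonneg ha, abs_of_nonneg hb] using
            abs_add_le (a * (u - v)) (b * (u - w))
  calc avgDist x ω (a • y + b • z)
      ≤ ∑ i, ω i * ((1 / n : ℝ) * ∑ j, (a * |x i j - y j| + b * |x i j - z j|)) := by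
        unfold avgDist l1Dist
        gcongr with i _ j
        · exact hω i
        · exact key _ _ _
    _ = a • avgDist x ω y + b • avgDist x ω z := by
        simp only [avgDist, l1Dist, smul_eq_mul, mul_sum, ← sum_add_distrib]
        exact sum_congr rfl fun i _ => sum_congr rfl fun j _ => by ring

theorem concaveOn_avgDist (x : Fin L → Fin n → ℝ) (y : Fin n → ℝ) :
    ConcaveOn ℝ (stdSimplex ℝ (Fin L)) (avgDist x · y) := by
  refine ⟨convex_stdSimplex ℝ _, fun ω _ ω' _ a b _ _ _ => le_of_eq ?_⟩
  simp [avgDist, add_mul, sum_add_distrib, mul_sum, mul_assoc]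

theorem continuous_avgDist (x : Fin L → Fin n → ℝ) (ω : Fin L → ℝ) :
    Continuous (avgDist x ω) := by
  unfold avgDist l1Dist; fun_prop

theorem continuous_avgDist_weights (x : Fin L → Fin n → ℝ) (y : Fin n → ℝ) :
    Continuous (avgDist x · y) := by
  unfold avgDist; fun_prop

theorem exists_rad_le_mrad (hL : 0 < L) (x : Fin L → Fin n → ℝ) :
    ∃ ω ∈ stdSimplex ℝ (Fin L), rad x ≤ mrad x ω := by
  have : Nonempty (Fin L) := ⟨⟨0, hL⟩⟩
  have hX : (Set.Icc (0 : Fin n → ℝ) 1).Nonempty := ⟨0, le_rfl, zero_le_one⟩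
  have hY : (stdSimplex ℝ (Fin L)).Nonempty := ⟨_, single_mem_stdSimplex ℝ ⟨0, hL⟩⟩
  obtain ⟨a, ha, b, hb, hab⟩ := Sion.exists_isSaddlePointOn (f := fun y ω => avgDist x ω y)
    hX (convex_Icc 0 1) isCompact_Icc
    (fun ω _ => (continuous_avgDist x ω).lowerSemicontinuous.lowerSemicontinuousOn _)
    (fun ω hω =>
      ((convexOn_avgDist x hω.1).subset (Set.subset_univ _) (convex_Icc 0 1)).quasiconvexOn)
    (convex_stdSimplex ℝ _) hY (isCompact_stdSimplex ℝ (Fin L))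
    (fun y _ => (continuous_avgDist_weights x y).upperSemicontinuous.upperSemicontinuousOn _)
    (fun y _ => (concaveOn_avgDist x y).quasiconcaveOn)
  refine ⟨b, hb, le_ciInf fun y => ?_⟩
  calc rad x ≤ ⨆ i, l1Dist (x i) a :=
        ciInf_le ⟨0, Set.forall_mem_range.2 fun _ => Real.iSup_nonneg fun _ => l1Dist_nonneg _ _⟩
          (⟨a, fun j => ⟨ha.1 j, ha.2 j⟩⟩ : UnitCube n)
    _ ≤ avgDist x b y.1 := ciSup_le fun i => by
        simpa [avgDist_single] using hab y.1 ⟨fun j => (y.2 j).1, fun j => (y.2 j).2⟩ _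
          (single_mem_stdSimplex ℝ i)

def colMass (x : Fin L → Fin n → ℝ) (ω : Fin L → ℝ) (j : Fin n) : ℝ := ∑ i, ω i * x i j

theorem colMass_eq_row {x : Fin L → Fin n → ℝ} (hx : ∀ i j, x i j = 0 ∨ x i j = 1)
    (ω : Fin L → ℝ) (j : Fin n) :
    colMass x ω j = Facet.row (.inl ({i | x i j = 1} : Finset (Fin L))) ω := by
  rw [Facet.row_inl, sum_filter]
  exact sum_congr rfl fun i _ => by rcases hx i j with h | h <;> simp [h]

theorem colMass_add_smul (x : Fin L → Fin n → ℝ) (ω v : Fin L → ℝ) (t : ℝ) (j : Fin n) :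
    colMass x (ω + t • v) j = colMass x ω j + t * colMass x v j := by
  simp [colMass, add_mul, sum_add_distrib, mul_sum, mul_assoc]

theorem abs_sub_eq_of_binary {u t : ℝ} (hu : u = 0 ∨ u = 1) (ht₀ : 0 ≤ t) (ht₁ : t ≤ 1) :
    |u - t| = u + t * (1 - 2 * u) := by
  rcases hu with rfl | rfl
  · rw [zero_sub, abs_neg, abs_of_nonneg ht₀]; ring
  · rw [abs_of_nonneg (by linarith)]; ring

theorem avgDist_eq_of_binary {x : Fin L → Fin n → ℝ} (hx : ∀ i j, x i j = 0 ∨ x i j = 1)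
    {ω : Fin L → ℝ} (hω : ∑ i, ω i = 1) {y : Fin n → ℝ} (hy : ∀ j, 0 ≤ y j ∧ y j ≤ 1) :
    avgDist x ω y = (1 / n : ℝ) * ∑ j, (colMass x ω j + y j * (1 - 2 * colMass x ω j)) := by
  have habs i j : |x i j - y j| = x i j + y j * (1 - 2 * x i j) :=
    abs_sub_eq_of_binary (hx i j) (hy j).1 (hy j).2
  have hcol j : ∑ i, ω i * (x i j + y j * (1 - 2 * x i j)) =
      colMass x ω j + y j * (1 - 2 * colMass x ω j) :=
    calc _ = colMass x ω j + y j * (∑ i, ω i - 2 * colMass x ω j) := by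
          simp only [colMass, mul_sum, mul_sub, ← sum_add_distrib, ← sum_sub_distrib]
          exact sum_congr rfl fun i _ => by ring
      _ = _ := by rw [hω]
  simp only [avgDist, l1Dist, habs, ← hcol, mul_sum]
  rw [sum_comm]
  exact sum_congr rfl fun j _ => sum_congr rfl fun i _ => by ring

/-- The weights for which the binary word `y` is an optimal centre: each column mass lies on the
same side of `1/2` as `y j`. -/
def roundingCell (x : Fin L → Fin n → ℝ) (y : Fin n → ℝ) : Set (Fin L → ℝ) :=
  stdSimplex ℝ (Fin L) ∩ {ω | ∀ j, 0 ≤ (2 * y j - 1) * (2 * colMass x ω j - 1)}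

theorem isCompact_roundingCell (x : Fin L → Fin n → ℝ) (y : Fin n → ℝ) :
    IsCompact (roundingCell x y) := by
  refine (isCompact_stdSimplex ℝ (Fin L)).inter_right ?_
  rw [Set.ofPred_forall]
  exact isClosed_iInter fun j => isClosed_le continuous_const (by unfold colMass; fun_prop)

theorem avgDist_le_of_mem_roundingCell {x : Fin L → Fin n → ℝ}
    (hx : ∀ i j, x i j = 0 ∨ x i j = 1) {y : Fin n → ℝ} (hy : ∀ j, y j = 0 ∨ y j = 1)
    {ω : Fin L → ℝ} (hω : ω ∈ roundingCell x y) (z : UnitCube n) :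
    avgDist x ω y ≤ avgDist x ω z := by
  have hy' j : 0 ≤ y j ∧ y j ≤ 1 := by rcases hy j with h | h <;> simp [h]
  rw [avgDist_eq_of_binary hx hω.1.2 hy', avgDist_eq_of_binary hx hω.1.2 z.2]
  refine mul_le_mul_of_nonneg_left (sum_le_sum fun j _ => ?_) (by positivity)
  have hj := hω.2 j
  obtain ⟨hz₀, hz₁⟩ := z.2 j
  rcases hy j with h | h <;> rw [h] at hj ⊢ <;> nlinarith

theorem extremePoints_roundingCell_subset_vertices {x : Fin L → Fin n → ℝ}
    (hx : ∀ i j, x i j = 0 ∨ x i j = 1) (y : Fin n → ℝ) :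
    (roundingCell x y).extremePoints ℝ ⊆ vertices L := by
  intro e he
  obtain ⟨⟨he₀, he₁⟩, he_col⟩ := he.1
  refine ⟨⟨he₀, he₁⟩, fun v hv => eq_zero_of_mem_extremePoints he ?_⟩
  have hv_sum : ∑ i, v i = 0 := by simpa using hv (.inr none) (by simpa using he₁)
  have hv_col j (h : (2 * y j - 1) * (2 * colMass x e j - 1) = 0) :
      (2 * y j - 1) * (2 * colMass x v j) = 0 := by
    rcases mul_eq_zero.1 h with h | h
    · rw [h, zero_mul]
    · have h_half : colMass x e j = 1 / 2 := by linarith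
      rw [colMass_eq_row hx] at h_half ⊢
      rw [hv _ h_half, mul_zero, mul_zero]
  filter_upwards [eventually_all.2 fun i => eventually_nonneg_add_mul (he₀ i)
      fun h => by simpa using hv (.inr (some i)) (by simpa using h),
    eventually_all.2 fun j => eventually_nonneg_add_mul (he_col j) (hv_col j)] with t h₀ h_col
  refine ⟨⟨fun i => by simpa using h₀ i, ?_⟩, fun j => ?_⟩
  · simp [sum_add_distrib, ← mul_sum, he₁, hv_sum]
  · rw [colMass_add_smul]; linarith [h_col j]

theorem exists_mem_vertices_mrad_le {x : Fin L → Fin n → ℝ}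
    (hx : ∀ i j, x i j = 0 ∨ x i j = 1) {ω : Fin L → ℝ} (hω : ω ∈ stdSimplex ℝ (Fin L)) :
    ∃ e ∈ vertices L, mrad x ω ≤ mrad x e := by
  let y : Fin n → ℝ := fun j => if colMass x ω j ≤ 1 / 2 then 0 else 1
  have hy j : y j = 0 ∨ y j = 1 := by unfold y; split_ifs <;> simp
  have hy_cube j : 0 ≤ y j ∧ y j ≤ 1 := by rcases hy j with h | h <;> simp [h]
  have hωy : ω ∈ roundingCell x y := ⟨hω, fun j => by unfold y; split_ifs <;> nlinarith⟩
  let l : StrongDual ℝ (Fin L → ℝ) := ∑ i, l1Dist (x i) y • ContinuousLinearMap.proj i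
  have hl ω : l ω = avgDist x ω y := by simp [l, avgDist, mul_comm]
  obtain ⟨e, he, hle⟩ := (isCompact_roundingCell x y).exists_mem_extremePoints_le l hωy
  refine ⟨e, extremePoints_roundingCell_subset_vertices hx y he, ?_⟩
  calc mrad x ω ≤ avgDist x ω y := ciInf_le (bddBelow_range_avgDist x hω.1) ⟨y, hy_cube⟩
    _ ≤ avgDist x e y := by simpa [hl] using hle
    _ ≤ mrad x e := le_ciInf (avgDist_le_of_mem_roundingCell hx hy he.1)

end BinaryRadius

open BinaryRadius in
/-- there is a finite set `Ω'_L` of probability measures on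
`{1,…,L}`, of size at most `4^(L²)`, such that for every `n` and every `L`-tuple
of binary words, `rad(x) = max_{ω ∈ Ω'_L} mrad_ω(x)`. -/
theorem stmt_11 (L : ℕ) (hL : 0 < L) :
    ∃ Ω' : Finset (Fin L → ℝ), Ω'.Nonempty ∧
      (∀ ω ∈ Ω', (∀ i, 0 ≤ ω i) ∧ ∑ i, ω i = 1) ∧
      Ω'.card ≤ 4 ^ (L ^ 2) ∧
      ∀ n : ℕ, 0 < n → ∀ x : Fin L → Fin n → ℝ,
        (∀ i j, x i j = 0 ∨ x i j = 1) →
        (⨅ y : {y : Fin n → ℝ // ∀ j, 0 ≤ y j ∧ y j ≤ 1},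
            ⨆ i, (1 / n : ℝ) * ∑ j, |x i j - y.1 j|)
          = ⨆ ω ∈ Ω',
              ⨅ y : {y : Fin n → ℝ // ∀ j, 0 ≤ y j ∧ y j ≤ 1},
                ∑ i, ω i * ((1 / n : ℝ) * ∑ j, |x i j - y.1 j|) := by
  have mem_simplex {ω} (hω : ω ∈ (vertices_finite L).toFinset) : ω ∈ stdSimplex ℝ (Fin L) :=
    ((vertices_finite L).mem_toFinset.1 hω).1
  refine ⟨(vertices_finite L).toFinset, ?_, fun ω hω => mem_simplex hω,
    card_toFinset_vertices_le L, fun n _ x hx => ?_⟩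
  · -- for the empty words (`n = 0`) the rounding cell is the whole simplex
    obtain ⟨e, he, -⟩ := exists_mem_vertices_mrad_le (x := fun _ (j : Fin 0) => j.elim0)
      (fun _ j => j.elim0) (single_mem_stdSimplex ℝ ⟨0, hL⟩)
    exact ⟨e, (vertices_finite L).mem_toFinset.2 he⟩
  obtain ⟨ω, hω, h_rad⟩ := exists_rad_le_mrad hL x
  obtain ⟨e, he, h_mrad⟩ := exists_mem_vertices_mrad_le hx hω
  exact Real.biSup_eq_of_forall_le_of_exists_le (f := mrad x) (rad_nonneg x)
    (fun ω hω => mrad_le_rad x (mem_simplex hω))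
    ⟨e, (vertices_finite L).mem_toFinset.2 he, h_rad.trans h_mrad⟩ |>.symm
end

section
/- Let V be a finite set of m unit vectors in a real Hilbert space such that among any three distinct vectors of V there exist two with inner product at most −4ε, for some 0 < ε < 1. Then m ≤ 1/(16 ε^{3/2}) + O(1/ε). -/
open scoped RealInnerProductSpace

open Finset

/-!
Put `δ = 4ε` and let `N(v)` be the set of `u ≠ v` in `V` with `⟪v, u⟫ > -δ`. The triple condition
makes every `N(v)` pairwise at inner product `≤ -δ`, so expanding `0 ≤ ‖∑ N(v)‖²` gives
`‖∑ N(v)‖² ≤ d (1 + δ) - d² δ` with `d = |N(v)|`, hence `δ d ≤ 1 + δ` and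
`‖∑ N(v)‖ ≤ (1 + δ) / (2√δ)`. Every other `u ≠ v` contributes at most `-δ` to the row sum
`∑ u, ⟪v, u⟫`, and summing the rows, `0 ≤ ‖∑ V‖²` yields `δ |V| ≤ 2 + 2δ + (1 + δ) / (2√δ)`,
that is `|V| ≤ 1 / (16 ε^{3/2}) + O(1/ε)`.
-/

section

variable {E : Type*} [NormedAddCommGroup E] [InnerProductSpace ℝ E]

lemma norm_sum_sq_le_card_mul {s : Finset E} {R : ℝ} (h : ∀ v ∈ s, ∑ u ∈ s, ⟪v, u⟫ ≤ R) :
    ‖∑ v ∈ s, v‖ ^ 2 ≤ #s * R := by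
  rw [← real_inner_self_eq_norm_sq, sum_inner]
  simp_rw [inner_sum]
  simpa [nsmul_eq_mul] using sum_le_card_nsmul s _ R h

lemma sum_inner_le_of_pairwise_inner_le {T : Finset E} {c : ℝ} (hT : ∀ u ∈ T, ‖u‖ ≤ 1)
    (hc : (T : Set E).Pairwise fun u w => ⟪u, w⟫ ≤ c) {v : E} (hv : v ∈ T) :
    ∑ u ∈ T, ⟪v, u⟫ ≤ 1 + (#T - 1) * c := by
  classical
  have hvv : ⟪v, v⟫ ≤ 1 := by
    rw [real_inner_self_eq_norm_sq]
    exact pow_le_one₀ (norm_nonneg v) (hT v hv)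
  have hrest : ∑ u ∈ T.erase v, ⟪v, u⟫ ≤ #(T.erase v) * c := by
    simpa [nsmul_eq_mul] using sum_le_card_nsmul (T.erase v) _ c fun u hu =>
      hc hv (mem_of_mem_erase hu) (ne_of_mem_erase hu).symm
  have hcard : (#(T.erase v) : ℝ) = #T - 1 := by
    rw [← card_erase_add_one hv]; push_cast; ring
  rw [← sum_erase_add T _ hv]
  rw [hcard] at hrest
  linarith

lemma norm_sum_sq_le_of_pairwise_inner_le {T : Finset E} {c : ℝ} (hT : ∀ u ∈ T, ‖u‖ ≤ 1)
    (hc : (T : Set E).Pairwise fun u w => ⟪u, w⟫ ≤ c) :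
    ‖∑ u ∈ T, u‖ ^ 2 ≤ #T * (1 + (#T - 1) * c) :=
  norm_sum_sq_le_card_mul fun _ hv => sum_inner_le_of_pairwise_inner_le hT hc hv

variable {δ : ℝ}

lemma card_mul_le_of_pairwise_inner_le_neg {T : Finset E} (hδ : 0 < δ)
    (hT : ∀ u ∈ T, ‖u‖ ≤ 1) (hc : (T : Set E).Pairwise fun u w => ⟪u, w⟫ ≤ -δ) :
    δ * #T ≤ 1 + δ := by
  have h := (sq_nonneg _).trans (norm_sum_sq_le_of_pairwise_inner_le hT hc)
  rcases (T.card).eq_zero_or_pos with h0 | h0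
  · simp only [h0, CharP.cast_eq_zero, mul_zero]; linarith
  · have : (0 : ℝ) < #T := by exact_mod_cast h0
    nlinarith

lemma norm_sum_le_of_pairwise_inner_le_neg {T : Finset E} (hδ : 0 < δ)
    (hT : ∀ u ∈ T, ‖u‖ ≤ 1) (hc : (T : Set E).Pairwise fun u w => ⟪u, w⟫ ≤ -δ) :
    ‖∑ u ∈ T, u‖ ≤ (1 + δ) / (2 * √δ) := by
  refine le_of_pow_le_pow_left₀ two_ne_zero (by positivity) ?_
  have hsq : ((1 + δ) / (2 * √δ)) ^ 2 = (1 + δ) ^ 2 / (4 * δ) := by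
    rw [div_pow, mul_pow, Real.sq_sqrt hδ.le]; ring
  rw [hsq, le_div_iff₀ (by positivity)]
  have h := norm_sum_sq_le_of_pairwise_inner_le hT hc
  nlinarith [sq_nonneg (2 * δ * #T - (1 + δ))]

variable [DecidableEq E]

noncomputable def nearNbhd (V : Finset E) (δ : ℝ) (v : E) : Finset E :=
  (V.erase v).filter fun u => -δ < ⟪v, u⟫

lemma pairwise_nearNbhd {V : Finset E}
    (hV : ∀ u ∈ V, ∀ v ∈ V, ∀ w ∈ V, u ≠ v → u ≠ w → v ≠ w →
      ⟪u, v⟫ ≤ -δ ∨ ⟪u, w⟫ ≤ -δ ∨ ⟪v, w⟫ ≤ -δ) {v : E} (hv : v ∈ V) :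
    (nearNbhd V δ v : Set E).Pairwise fun u w => ⟪u, w⟫ ≤ -δ := by
  intro u hu w hw huw
  simp only [nearNbhd, coe_filter, mem_erase, Set.mem_ofPred_eq] at hu hw
  obtain ⟨⟨hvu, hu⟩, hu'⟩ := hu
  obtain ⟨⟨hvw, hw⟩, hw'⟩ := hw
  rcases hV v hv u hu w hw (Ne.symm hvu) (Ne.symm hvw) huw with h | h | h
  · exact absurd h hu'.not_ge
  · exact absurd h hw'.not_ge
  · exact h

lemma sum_inner_le_of_pairwise_nearNbhd {V : Finset E} (hδ : 0 < δ) (hV : ∀ u ∈ V, ‖u‖ = 1)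
    {v : E} (hv : v ∈ V) (hN : (nearNbhd V δ v : Set E).Pairwise fun u w => ⟪u, w⟫ ≤ -δ) :
    ∑ u ∈ V, ⟪v, u⟫ ≤ 2 + 2 * δ + (1 + δ) / (2 * √δ) - δ * #V := by
  have hN1 : ∀ u ∈ nearNbhd V δ v, ‖u‖ ≤ 1 := fun u hu =>
    (hV u (mem_of_mem_erase (mem_filter.1 hu).1)).le
  set far := (V.erase v).filter fun u => ¬ -δ < ⟪v, u⟫
  have hnear : ∑ u ∈ nearNbhd V δ v, ⟪v, u⟫ ≤ (1 + δ) / (2 * √δ) := by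
    rw [← inner_sum]
    calc ⟪v, ∑ u ∈ nearNbhd V δ v, u⟫ ≤ ‖v‖ * ‖∑ u ∈ nearNbhd V δ v, u‖ := real_inner_le_norm _ _
      _ ≤ (1 + δ) / (2 * √δ) := by
        rw [hV v hv, one_mul]; exact norm_sum_le_of_pairwise_inner_le_neg hδ hN1 hN
  have hfar : ∑ u ∈ far, ⟪v, u⟫ ≤ #far * -δ := by
    simpa [nsmul_eq_mul] using sum_le_card_nsmul far _ (-δ) fun u hu =>
      le_of_not_gt (mem_filter.1 hu).2
  have hcard : (#(nearNbhd V δ v) : ℝ) + #far + 1 = #V := by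
    rw [← card_erase_add_one hv, ← card_filter_add_card_filter_not
      (s := V.erase v) fun u => -δ < ⟪v, u⟫]
    push_cast; rfl
  have hvv : ⟪v, v⟫ = 1 := by rw [real_inner_self_eq_norm_sq, hV v hv]; norm_num
  have hsize := card_mul_le_of_pairwise_inner_le_neg hδ hN1 hN
  rw [← sum_erase_add V _ hv, ← sum_filter_add_sum_filter_not (V.erase v) fun u => -δ < ⟪v, u⟫]
  change ∑ u ∈ nearNbhd V δ v, ⟪v, u⟫ + ∑ u ∈ far, ⟪v, u⟫ + ⟪v, v⟫ ≤ _
  nlinarith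

theorem card_le_of_forall_triple_inner_le {V : Finset E} (hδ : 0 < δ) (hV1 : ∀ v ∈ V, ‖v‖ = 1)
    (hV : ∀ u ∈ V, ∀ v ∈ V, ∀ w ∈ V, u ≠ v → u ≠ w → v ≠ w →
      ⟪u, v⟫ ≤ -δ ∨ ⟪u, w⟫ ≤ -δ ∨ ⟪v, w⟫ ≤ -δ) :
    δ * #V ≤ 2 + 2 * δ + (1 + δ) / (2 * √δ) := by
  have h := (sq_nonneg _).trans <| norm_sum_sq_le_card_mul fun v hv =>
    sum_inner_le_of_pairwise_nearNbhd hδ hV1 hv (pairwise_nearNbhd hV hv)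
  rcases V.card.eq_zero_or_pos with h0 | h0
  · simp only [h0, CharP.cast_eq_zero, mul_zero]; positivity
  · have : (0 : ℝ) < #V := by exact_mod_cast h0
    nlinarith

end

/-- if among any three distinct unit vectors of a finite set `V`
some pair has inner product at most `-4ε`, then `|V| ≤ 1/(16 ε^{3/2}) + O(1/ε)`. -/
theorem stmt_13 :
    ∃ K : ℝ, ∀ (E : Type) [NormedAddCommGroup E] [InnerProductSpace ℝ E]
      (V : Finset E) (ε : ℝ), 0 < ε → ε < 1 →
      (∀ v ∈ V, ‖v‖ = 1) →
      (∀ u ∈ V, ∀ v ∈ V, ∀ w ∈ V, u ≠ v → u ≠ w → v ≠ w →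
        ⟪u, v⟫ ≤ -(4 * ε) ∨ ⟪u, w⟫ ≤ -(4 * ε) ∨ ⟪v, w⟫ ≤ -(4 * ε)) →
      (V.card : ℝ) ≤ 1 / (16 * ε ^ ((3 : ℝ) / 2)) + K / ε := by
  refine ⟨3, fun E _ _ V ε hε hε1 hV1 hV => ?_⟩
  classical
  have h := card_le_of_forall_triple_inner_le (by positivity : 0 < 4 * ε) hV1 hV
  obtain ⟨s, hs, rfl⟩ : ∃ s, 0 < s ∧ ε = s ^ 2 := ⟨√ε, by positivity, (Real.sq_sqrt hε.le).symm⟩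
  have hs1 : s < 1 := by nlinarith
  have hpow : (s ^ 2) ^ ((3 : ℝ) / 2) = s ^ 3 := by
    rw [Real.rpow_div_two_eq_sqrt _ (by positivity), Real.sqrt_sq hs.le]; norm_cast
  have hsqrt : √(4 * s ^ 2) = 2 * s := by
    rw [show 4 * s ^ 2 = (2 * s) ^ 2 by ring, Real.sqrt_sq (by positivity)]
  rw [hsqrt] at h
  rw [hpow]
  rw [div_add_div _ _ (by positivity) (by positivity), le_div_iff₀ (by positivity)]
  have hB : (1 + 4 * s ^ 2) / (2 * (2 * s)) * (4 * s) = 1 + 4 * s ^ 2 := by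
    field_simp; ring
  have h' : 16 * s ^ 3 * #V ≤ 1 + 8 * s + 4 * s ^ 2 + 32 * s ^ 3 := by
    nlinarith [mul_le_mul_of_nonneg_right h (by positivity : (0 : ℝ) ≤ 4 * s)]
  have hs4 : s ^ 4 ≤ s ^ 3 := pow_le_pow_of_le_one hs.le hs1.le (by norm_num)
  have hs5 : s ^ 5 ≤ s ^ 3 := pow_le_pow_of_le_one hs.le hs1.le (by norm_num)
  nlinarith [mul_le_mul_of_nonneg_right h' (sq_nonneg s)]
end

section
/- For L ≥ 2 and M ≥ 2, the M−1 unit vectors forming a regular (M−1)-simplex in Hilbert space (pairwise inner products −1/(M−1)) have the property that every L-tuple of distinct vectors has circumscribed radius at least √((L−1)/L) · √(M/(M−1)). Consequently, for spherical codes, M_L(ε) ≥ c₁/ε for some constant c₁ = c₁(L) > 0. -/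
/-!
For unit vectors `x₁, …, x_L` and any centre `y`, the centroid minimises `∑ ‖xᵢ - y‖²`, whence
`L · ∑ ‖xᵢ - y‖² ≥ L² - ‖∑ xᵢ‖²`. If all pairwise inner products equal `ρ`, then
`‖∑ xᵢ‖² = L + L(L-1)ρ`, so some `‖xᵢ - y‖²` is at least `(L-1)(1-ρ)/L`; for the regular simplex,
`1 - ρ = M/(M-1)`. Since `√(M/(M-1)) ≥ 1 + 1/(3(M-1))`, the `M`-vertex simplex with
`M - 1 ≈ τ_L/(3ε)` is a code all of whose `L`-subsets have radius at least `τ_L + ε`.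
-/

open scoped RealInnerProductSpace
open Finset

noncomputable def circumradius {ι E : Type*} [SeminormedAddCommGroup E] (x : ι → E) : ℝ :=
  ⨅ y, ⨆ i, ‖x i - y‖

theorem le_circumradius_of_forall_exists_le {ι E : Type*} [SeminormedAddCommGroup E] [Finite ι]
    {x : ι → E} {r : ℝ} (h : ∀ y, ∃ i, r ≤ ‖x i - y‖) : r ≤ circumradius x :=
  le_ciInf fun y ↦
    let ⟨i, hi⟩ := h y
    hi.trans (le_ciSup (f := fun i ↦ ‖x i - y‖) (Set.finite_range _).bddAbove i)

section InnerProductSpace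

variable {ι E : Type*} [Fintype ι] [NormedAddCommGroup E] [InnerProductSpace ℝ E]

theorem card_mul_sum_norm_sq_sub_norm_sum_sq_le (x : ι → E) (y : E) :
    Fintype.card ι * ∑ i, ‖x i‖ ^ 2 - ‖∑ i, x i‖ ^ 2 ≤
      Fintype.card ι * ∑ i, ‖x i - y‖ ^ 2 := by
  set n : ℝ := (Fintype.card ι : ℝ)
  have h_sum : ∑ i, ‖x i - y‖ ^ 2 = ∑ i, ‖x i‖ ^ 2 - 2 * ⟪∑ i, x i, y⟫ + n * ‖y‖ ^ 2 := by
    simp [norm_sub_sq_real, sum_add_distrib, sum_sub_distrib, ← mul_sum, sum_inner, n]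
  have h_center : ‖∑ i, x i - n • y‖ ^ 2 =
      ‖∑ i, x i‖ ^ 2 - 2 * n * ⟪∑ i, x i, y⟫ + n ^ 2 * ‖y‖ ^ 2 := by
    rw [norm_sub_sq_real, real_inner_smul_right, norm_smul, Real.norm_of_nonneg (by positivity)]
    ring
  rw [h_sum]
  nlinarith [sq_nonneg ‖∑ i, x i - n • y‖]

theorem norm_sum_sq_of_pairwise_inner_eq {x : ι → E} {ρ : ℝ} (hx : ∀ i, ‖x i‖ = 1)
    (hρ : Pairwise fun i j ↦ ⟪x i, x j⟫ = ρ) :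
    ‖∑ i, x i‖ ^ 2 = Fintype.card ι + Fintype.card ι * (Fintype.card ι - 1) * ρ := by
  classical
  have h_inner : ∀ i j, ⟪x i, x j⟫ = ρ + if i = j then 1 - ρ else 0 := by
    intro i j
    split_ifs with h
    · simp [h, hx]
    · simp [hρ h]
  rw [← real_inner_self_eq_norm_sq, sum_inner]
  simp_rw [inner_sum, h_inner, sum_add_distrib, sum_ite_eq]
  simp
  ring

theorem sqrt_le_circumradius_of_pairwise_inner_eq [Nonempty ι] {x : ι → E} {ρ : ℝ}
    (hx : ∀ i, ‖x i‖ = 1) (hρ : Pairwise fun i j ↦ ⟪x i, x j⟫ = ρ) :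
    √((Fintype.card ι - 1) / Fintype.card ι * (1 - ρ)) ≤ circumradius x := by
  have hn : (0 : ℝ) < Fintype.card ι := by positivity
  refine le_circumradius_of_forall_exists_le fun y ↦ ?_
  have h_sum : ∑ _i : ι, (Fintype.card ι - 1) / Fintype.card ι * (1 - ρ) ≤
      ∑ i, ‖x i - y‖ ^ 2 := by
    have := card_mul_sum_norm_sq_sub_norm_sum_sq_le x y
    simp only [hx, norm_sum_sq_of_pairwise_inner_eq hx hρ, one_pow, sum_const, card_univ,
      nsmul_eq_mul, mul_one] at this ⊢
    field_simp
    nlinarith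
  obtain ⟨i, -, hi⟩ := exists_le_of_sum_le univ_nonempty h_sum
  exact ⟨i, (Real.sqrt_le_left (norm_nonneg _)).mpr hi⟩

theorem sqrt_mul_sqrt_le_circumradius_comp {L M : ℕ} [NeZero L] (hM : 2 ≤ M) {v : Fin M → E}
    (hv : ∀ i, ‖v i‖ = 1) (hvv : ∀ i j, i ≠ j → ⟪v i, v j⟫ = -1 / ((M : ℝ) - 1))
    {w : Fin L → Fin M} (hw : Function.Injective w) :
    √(((L : ℝ) - 1) / L) * √((M : ℝ) / ((M : ℝ) - 1)) ≤ circumradius (v ∘ w) := by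
  have hM' : (0 : ℝ) < M - 1 := by
    have : (2 : ℝ) ≤ M := by exact_mod_cast hM
    linarith
  have h_gap : 1 - -1 / ((M : ℝ) - 1) = M / (M - 1) := by
    field_simp
    ring
  have h := sqrt_le_circumradius_of_pairwise_inner_eq (x := v ∘ w) (fun i ↦ hv (w i))
    fun i j hij ↦ hvv (w i) (w j) (hw.ne hij)
  rwa [Fintype.card_fin, h_gap, Real.sqrt_mul' _ (div_nonneg (Nat.cast_nonneg _) hM'.le)] at h

end InnerProductSpace

theorem inner_single_sub_const {M : ℕ} (hM : M ≠ 0) (i j : Fin M) :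
    ⟪EuclideanSpace.single i (1 : ℝ) - WithLp.toLp 2 (fun _ ↦ (M : ℝ)⁻¹),
      EuclideanSpace.single j 1 - WithLp.toLp 2 (fun _ ↦ (M : ℝ)⁻¹)⟫ =
      (if i = j then 1 else 0) - (M : ℝ)⁻¹ := by
  simp [inner_sub_left, inner_sub_right, EuclideanSpace.inner_single_left,
    EuclideanSpace.inner_single_right, EuclideanSpace.real_norm_sq_eq, eq_comm]
  field_simp
  ring

noncomputable def regularSimplex (M : ℕ) (i : Fin M) : EuclideanSpace ℝ (Fin M) :=
  √(M / (M - 1)) • (EuclideanSpace.single i 1 - WithLp.toLp 2 fun _ ↦ (M : ℝ)⁻¹)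

theorem inner_regularSimplex {M : ℕ} (hM : 2 ≤ M) (i j : Fin M) :
    ⟪regularSimplex M i, regularSimplex M j⟫ = if i = j then 1 else -1 / ((M : ℝ) - 1) := by
  have hM' : (0 : ℝ) < M - 1 := by
    have : (2 : ℝ) ≤ M := by exact_mod_cast hM
    linarith
  rw [regularSimplex, regularSimplex, real_inner_smul_left, real_inner_smul_right,
    inner_single_sub_const (by omega), ← mul_assoc, Real.mul_self_sqrt (by positivity)]
  have := hM'.ne'
  split_ifs
  · field_simp
  · field_simp
    ring

theorem norm_regularSimplex {M : ℕ} (hM : 2 ≤ M) (i : Fin M) : ‖regularSimplex M i‖ = 1 := by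
  have h := inner_regularSimplex hM i i
  rwa [if_pos rfl, real_inner_self_eq_norm_sq,
    pow_eq_one_iff_of_nonneg (norm_nonneg _) two_ne_zero] at h

theorem regularSimplex_injective {M : ℕ} (hM : 2 ≤ M) : Function.Injective (regularSimplex M) := by
  intro i j hij
  by_contra hne
  have h := inner_regularSimplex hM i j
  rw [if_neg hne, hij, real_inner_self_eq_norm_sq, norm_regularSimplex hM] at h
  have : (1 : ℝ) < M := by exact_mod_cast hM
  have : -1 / ((M : ℝ) - 1) < 0 := div_neg_of_neg_of_pos (by norm_num) (by linarith)
  linarith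

theorem one_add_div_three_le_sqrt_one_add {a : ℝ} (ha₀ : 0 ≤ a) (ha₃ : a ≤ 3) :
    1 + a / 3 ≤ √(1 + a) :=
  (Real.le_sqrt (by positivity) (by positivity)).mpr (by nlinarith)

theorem add_le_mul_sqrt_div_sub_one {t ε : ℝ} {M : ℕ} (ht : 0 ≤ t) (hM : 2 ≤ M)
    (hε : 3 * ε * (M - 1) ≤ t) : t + ε ≤ t * √((M : ℝ) / ((M : ℝ) - 1)) := by
  have hM' : (1 : ℝ) ≤ M - 1 := by
    have : (2 : ℝ) ≤ M := by exact_mod_cast hM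
    linarith
  have h_ratio : (M : ℝ) / (M - 1) = 1 + 1 / (M - 1) := by
    field_simp
    ring
  have h_sqrt := one_add_div_three_le_sqrt_one_add (a := 1 / ((M : ℝ) - 1)) (by positivity)
    (by rw [div_le_iff₀ (by linarith)]; linarith)
  rw [h_ratio]
  calc t + ε ≤ t * (1 + 1 / ((M : ℝ) - 1) / 3) := by
        rw [show t * (1 + 1 / ((M : ℝ) - 1) / 3) = t + t / (M - 1) / 3 by ring,
          add_le_add_iff_left, le_div_iff₀ three_pos, le_div_iff₀ (by linarith)]
        linarith
    _ ≤ _ := mul_le_mul_of_nonneg_left h_sqrt ht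

theorem add_le_circumradius_of_mem_range_regularSimplex {L M : ℕ} [NeZero L] (hM : 2 ≤ M)
    {ε : ℝ} (hε : 3 * ε * (M - 1) ≤ √(((L : ℝ) - 1) / L))
    {w : Fin L → EuclideanSpace ℝ (Fin M)} (hw_mem : ∀ i, w i ∈ Set.range (regularSimplex M))
    (hw : Function.Injective w) : √(((L : ℝ) - 1) / L) + ε ≤ circumradius w := by
  choose g hg using hw_mem
  obtain rfl : regularSimplex M ∘ g = w := funext hg
  refine (add_le_mul_sqrt_div_sub_one (Real.sqrt_nonneg _) hM hε).trans ?_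
  exact sqrt_mul_sqrt_le_circumradius_comp hM (norm_regularSimplex hM)
    (fun i j hij ↦ by rw [inner_regularSimplex hM, if_neg hij]) hw.of_comp

/-- the unit vectors of a regular simplex (pairwise inner products
`-1/(M-1)`) have every `L`-tuple of distinct vectors of circumscribed radius at
least `√((L-1)/L)·√(M/(M-1))`; consequently for spherical codes
`M_L(ε) ≥ c₁/ε`. -/
theorem stmt_15 (L : ℕ) (hL : 2 ≤ L) :
    (∀ (E : Type) [NormedAddCommGroup E] [InnerProductSpace ℝ E] (M : ℕ), 2 ≤ M →
      ∀ v : Fin M → E, (∀ i, ‖v i‖ = 1) →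
        (∀ i j, i ≠ j → ⟪v i, v j⟫ = -1 / ((M : ℝ) - 1)) →
        ∀ w : Fin L → Fin M, Function.Injective w →
          Real.sqrt (((L : ℝ) - 1) / L) * Real.sqrt ((M : ℝ) / ((M : ℝ) - 1))
            ≤ ⨅ y : E, ⨆ i, ‖v (w i) - y‖) ∧
    (∃ c₁ : ℝ, 0 < c₁ ∧ ∀ ε : ℝ, 0 < ε →
      ∃ (n : ℕ) (C : Finset (EuclideanSpace ℝ (Fin n))),
        (∀ c ∈ C, ‖c‖ = 1) ∧
        (∀ w : Fin L → EuclideanSpace ℝ (Fin n), (∀ i, w i ∈ C) →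
          Function.Injective w →
            Real.sqrt (((L : ℝ) - 1) / L) + ε ≤ ⨅ y, ⨆ i, ‖w i - y‖) ∧
        c₁ / ε ≤ C.card) := by
  have : NeZero L := ⟨by omega⟩
  set t := √(((L : ℝ) - 1) / L)
  have ht : 0 < t := Real.sqrt_pos.mpr (div_pos (by norm_num; omega) (by positivity))
  refine ⟨fun E _ _ M hM v hv hvv w hw ↦ sqrt_mul_sqrt_le_circumradius_comp hM hv hvv hw,
    t / 3, by positivity, fun ε hε ↦ ?_⟩
  rcases lt_or_ge (t / (3 * ε)) 1 with h_small | h_large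
  · refine ⟨1, {EuclideanSpace.single 0 1}, by simp, fun w hw_mem hw ↦ ?_, ?_⟩
    · have h01 := hw ((mem_singleton.mp (hw_mem ⟨0, by omega⟩)).trans
        (mem_singleton.mp (hw_mem ⟨1, by omega⟩)).symm)
      simp at h01
    · rw [card_singleton, Nat.cast_one, div_div]
      exact h_small.le
  · set M := ⌊t / (3 * ε)⌋₊ + 1
    have hM : 2 ≤ M := by have := Nat.one_le_floor_iff _ |>.mpr h_large; omega
    refine ⟨M, univ.image (regularSimplex M), ?_, fun w hw_mem hw ↦ ?_, ?_⟩
    · simpa using norm_regularSimplex hM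
    · refine add_le_circumradius_of_mem_range_regularSimplex hM ?_
        (fun i ↦ by simpa using hw_mem i) hw
      have := Nat.floor_le (by positivity : 0 ≤ t / (3 * ε))
      rw [le_div_iff₀ (by positivity)] at this
      simp only [M, Nat.cast_add, Nat.cast_one, add_sub_cancel_right]
      linarith
    · rw [card_image_of_injective _ (regularSimplex_injective hM), card_univ, Fintype.card_fin,
        div_div]
      exact (Nat.lt_floor_add_one _).le.trans (by simp [M])
end

section
/- For any L-tuple x = (x₁,…,x_L) of vectors in a real Hilbert space, the squared circumscribed radius satisfies rad(x)² = max over probability vectors ω on {1,…,L} of (1 − ‖∑ᵢ ωᵢ xᵢ‖²), provided all xᵢ are unit vectors; more generally rad(x)² = max_ω min_y E_{i∼ω}‖xᵢ − y‖² = 1 − min_ω V(ω) where V(ω) = ∑_{i,j} ⟨xᵢ,xⱼ⟩ ωᵢ ωⱼ is the Gram quadratic form, when ‖xᵢ‖ = 1 for all i. -/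
open scoped RealInnerProductSpace

/-!
For a probability vector `ω`, the weighted mean `∑ ωᵢ ‖xᵢ - y‖²` equals
`1 - ‖c‖² + ‖c - y‖²` with `c = ∑ ωᵢ xᵢ`, so its infimum over `y` is `1 - ‖c‖²`, and bounding the
mean by the maximum gives `1 - ‖c‖² ≤ rad²`. For the reverse inequality take `c` the point of
least norm in the convex hull of the `xᵢ`: the variational inequality `‖c‖² ≤ ⟪c, xᵢ⟫` gives
`‖xᵢ - c‖² = 1 - 2⟪c, xᵢ⟫ + ‖c‖² ≤ 1 - ‖c‖²` for every `i`, so `rad² ≤ 1 - ‖c‖²`.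
-/

lemma le_sq_ciInf {α : Type*} [Nonempty α] {g : α → ℝ} (hg : ∀ y, 0 ≤ g y) {a : ℝ}
    (h : ∀ y, a ≤ g y ^ 2) : a ≤ (⨅ y, g y) ^ 2 :=
  (Real.sqrt_le_iff.mp (le_ciInf fun y => Real.sqrt_le_iff.mpr ⟨hg y, h y⟩)).2

lemma IsMinOn.norm_sq_le_inner {E : Type*} [NormedAddCommGroup E] [InnerProductSpace ℝ E]
    {K : Set E} (hK : Convex ℝ K) {v w : E} (hv : v ∈ K) (hmin : IsMinOn (‖·‖) K v)
    (hw : w ∈ K) : ‖v‖ ^ 2 ≤ ⟪v, w⟫ := by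
  have : Nonempty K := ⟨⟨v, hv⟩⟩
  have hproj : ‖0 - v‖ = ⨅ z : K, ‖0 - (z : E)‖ := by
    simp only [zero_sub, norm_neg]
    exact le_antisymm (le_ciInf fun z => hmin z.2)
      (ciInf_le (f := fun z : K => ‖(z : E)‖)
        ⟨0, Set.forall_mem_range.2 fun _ => norm_nonneg _⟩ ⟨v, hv⟩)
  have := (norm_eq_iInf_iff_real_inner_le_zero hK hv).1 hproj w hw
  rw [zero_sub, inner_neg_left, inner_sub_right, real_inner_self_eq_norm_sq] at this
  linarith

section WeightedMeans

variable {E : Type*} [NormedAddCommGroup E] [InnerProductSpace ℝ E] {ι : Type*} [Fintype ι]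

lemma sum_mul_norm_sub_sq {ω : ι → ℝ} (hω : ∑ i, ω i = 1) (x : ι → E) (y : E) :
    ∑ i, ω i * ‖x i - y‖ ^ 2
      = ∑ i, ω i * ‖x i‖ ^ 2 - ‖∑ i, ω i • x i‖ ^ 2 + ‖∑ i, ω i • x i - y‖ ^ 2 := by
  have hinner : ⟪∑ i, ω i • x i, y⟫ = ∑ i, ω i * ⟪x i, y⟫ := by
    simp only [sum_inner, real_inner_smul_left]
  simp only [norm_sub_sq_real, hinner, mul_add, mul_sub, Finset.sum_add_distrib,
    Finset.sum_sub_distrib, ← Finset.sum_mul, hω, mul_left_comm _ (2 : ℝ), ← Finset.mul_sum]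
  ring

lemma ciInf_sum_mul_norm_sub_sq {ω : ι → ℝ} (hω : ∑ i, ω i = 1) (x : ι → E) :
    ⨅ y, ∑ i, ω i * ‖x i - y‖ ^ 2 = ∑ i, ω i * ‖x i‖ ^ 2 - ‖∑ i, ω i • x i‖ ^ 2 := by
  simp_rw [sum_mul_norm_sub_sq hω x]
  have hle : ∀ y : E, ∑ i, ω i * ‖x i‖ ^ 2 - ‖∑ i, ω i • x i‖ ^ 2
      ≤ ∑ i, ω i * ‖x i‖ ^ 2 - ‖∑ i, ω i • x i‖ ^ 2 + ‖∑ i, ω i • x i - y‖ ^ 2 :=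
    fun y => le_add_of_nonneg_right (sq_nonneg _)
  exact le_antisymm (ciInf_le_of_le ⟨_, Set.forall_mem_range.2 hle⟩ (∑ i, ω i • x i) (by simp))
    (le_ciInf hle)

lemma sum_mul_norm_sq_sub_norm_sq_le_sq_ciInf_ciSup {ω : ι → ℝ} (hω₀ : ∀ i, 0 ≤ ω i)
    (hω : ∑ i, ω i = 1) (x : ι → E) :
    ∑ i, ω i * ‖x i‖ ^ 2 - ‖∑ i, ω i • x i‖ ^ 2 ≤ (⨅ y, ⨆ i, ‖x i - y‖) ^ 2 := by
  refine le_sq_ciInf (fun y => Real.iSup_nonneg fun i => norm_nonneg _) fun y => ?_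
  have hmax : ∀ i, ‖x i - y‖ ^ 2 ≤ (⨆ i, ‖x i - y‖) ^ 2 := fun i =>
    pow_le_pow_left₀ (norm_nonneg _)
      (le_ciSup (f := fun i => ‖x i - y‖) (Set.finite_range _).bddAbove i) 2
  calc ∑ i, ω i * ‖x i‖ ^ 2 - ‖∑ i, ω i • x i‖ ^ 2
      ≤ ∑ i, ω i * ‖x i - y‖ ^ 2 := by
        rw [sum_mul_norm_sub_sq hω]
        exact le_add_of_nonneg_right (sq_nonneg _)
    _ ≤ ∑ i, ω i * (⨆ i, ‖x i - y‖) ^ 2 :=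
        Finset.sum_le_sum fun i _ => mul_le_mul_of_nonneg_left (hmax i) (hω₀ i)
    _ = (⨆ i, ‖x i - y‖) ^ 2 := by rw [← Finset.sum_mul, hω, one_mul]

lemma norm_sum_smul_sq (ω : ι → ℝ) (x : ι → E) :
    ‖∑ i, ω i • x i‖ ^ 2 = ∑ i, ∑ j, ⟪x i, x j⟫ * ω i * ω j := by
  simp only [← real_inner_self_eq_norm_sq, sum_inner, inner_sum, real_inner_smul_left,
    real_inner_smul_right]
  exact Finset.sum_congr rfl fun i _ => Finset.sum_congr rfl fun j _ => by
    rw [real_inner_comm (x j) (x i)]; ring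

lemma exists_mem_stdSimplex_norm_sq_le_inner [Nonempty ι] (x : ι → E) :
    ∃ ω ∈ stdSimplex ℝ ι, ∀ i, ‖∑ j, ω j • x j‖ ^ 2 ≤ ⟪∑ j, ω j • x j, x i⟫ := by
  classical
  set T := Fintype.linearCombination ℝ x
  have hT : ∀ ω, T ω = ∑ j, ω j • x j := Fintype.linearCombination_apply ℝ x
  have hvertex : ∀ i, x i ∈ T '' stdSimplex ℝ ι := fun i =>
    ⟨Pi.single i 1, single_mem_stdSimplex ℝ i, by simp [T]⟩
  obtain ⟨_, ⟨ω, hω, rfl⟩, hmin⟩ :=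
    ((isCompact_stdSimplex ℝ ι).image T.continuous_of_finiteDimensional).exists_isMinOn
      ⟨_, hvertex (Classical.arbitrary ι)⟩ continuous_norm.continuousOn
  refine ⟨ω, hω, fun i => ?_⟩
  rw [← hT]
  exact hmin.norm_sq_le_inner ((convex_stdSimplex ℝ ι).linear_image T) ⟨ω, hω, rfl⟩ (hvertex i)

lemma sq_ciInf_ciSup_le_one_sub_norm_sq [Nonempty ι] {x : ι → E} (hunit : ∀ i, ‖x i‖ = 1)
    {c : E} (hc : ∀ i, ‖c‖ ^ 2 ≤ ⟪c, x i⟫) : (⨅ y, ⨆ i, ‖x i - y‖) ^ 2 ≤ 1 - ‖c‖ ^ 2 := by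
  obtain ⟨i, hi⟩ := exists_eq_ciSup_of_finite (f := fun i => ‖x i - c‖)
  have hnonneg : ∀ y : E, 0 ≤ ⨆ i, ‖x i - y‖ := fun y => Real.iSup_nonneg fun i => norm_nonneg _
  calc (⨅ y, ⨆ i, ‖x i - y‖) ^ 2
      ≤ (⨆ i, ‖x i - c‖) ^ 2 := pow_le_pow_left₀ (Real.iInf_nonneg hnonneg)
        (ciInf_le ⟨0, Set.forall_mem_range.2 hnonneg⟩ c) 2
    _ = ‖x i - c‖ ^ 2 := by rw [hi]
    _ ≤ 1 - ‖c‖ ^ 2 := by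
        rw [norm_sub_sq_real, hunit i, real_inner_comm]
        linarith [hc i]

end WeightedMeans

theorem stmt_16_general {E : Type*} [NormedAddCommGroup E] [InnerProductSpace ℝ E]
    (L : ℕ) (hL : 0 < L) (x : Fin L → E)
    (hunit : ∀ i, ‖x i‖ = 1) :
    ((⨅ y : E, ⨆ i, ‖x i - y‖) ^ 2
        = ⨆ ω : {ω : Fin L → ℝ // (∀ i, 0 ≤ ω i) ∧ ∑ i, ω i = 1},
            ⨅ y : E, ∑ i, ω.1 i * ‖x i - y‖ ^ 2) ∧
    ((⨅ y : E, ⨆ i, ‖x i - y‖) ^ 2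
        = ⨆ ω : {ω : Fin L → ℝ // (∀ i, 0 ≤ ω i) ∧ ∑ i, ω i = 1},
            (1 - ‖∑ i, ω.1 i • x i‖ ^ 2)) ∧
    ((⨅ y : E, ⨆ i, ‖x i - y‖) ^ 2
        = 1 - ⨅ ω : {ω : Fin L → ℝ // (∀ i, 0 ≤ ω i) ∧ ∑ i, ω i = 1},
            ∑ i, ∑ j, ⟪x i, x j⟫ * ω.1 i * ω.1 j) := by
  have : Nonempty (Fin L) := ⟨⟨0, hL⟩⟩
  set r := ⨅ y : E, ⨆ i, ‖x i - y‖
  have hmean : ∀ ω : Fin L → ℝ, ∑ i, ω i = 1 → ∑ i, ω i * ‖x i‖ ^ 2 = 1 := fun ω hω => by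
    simp [hunit, hω]
  have hle : ∀ ω : {ω : Fin L → ℝ // (∀ i, 0 ≤ ω i) ∧ ∑ i, ω i = 1},
      1 - ‖∑ i, ω.1 i • x i‖ ^ 2 ≤ r ^ 2 := fun ω => by
    simpa [hmean ω.1 ω.2.2] using sum_mul_norm_sq_sub_norm_sq_le_sq_ciInf_ciSup ω.2.1 ω.2.2 x
  obtain ⟨ω₀, hω₀, hc⟩ := exists_mem_stdSimplex_norm_sq_le_inner x
  have : Nonempty {ω : Fin L → ℝ // (∀ i, 0 ≤ ω i) ∧ ∑ i, ω i = 1} := ⟨⟨ω₀, hω₀⟩⟩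
  have hr : r ^ 2 = 1 - ‖∑ i, ω₀ i • x i‖ ^ 2 :=
    le_antisymm (sq_ciInf_ciSup_le_one_sub_norm_sq hunit hc) (hle ⟨ω₀, hω₀⟩)
  have hsup : ⨆ ω : {ω : Fin L → ℝ // (∀ i, 0 ≤ ω i) ∧ ∑ i, ω i = 1},
      (1 - ‖∑ i, ω.1 i • x i‖ ^ 2) = r ^ 2 :=
    le_antisymm (ciSup_le hle) (le_ciSup_of_le ⟨_, Set.forall_mem_range.2 hle⟩ ⟨ω₀, hω₀⟩ hr.le)
  have hinf : ⨅ ω : {ω : Fin L → ℝ // (∀ i, 0 ≤ ω i) ∧ ∑ i, ω i = 1},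
      ‖∑ i, ω.1 i • x i‖ ^ 2 = 1 - r ^ 2 := by
    have hge := fun ω => sub_le_comm.mp (hle ω)
    exact le_antisymm (ciInf_le_of_le ⟨_, Set.forall_mem_range.2 hge⟩ ⟨ω₀, hω₀⟩ (by linarith))
      (le_ciInf hge)
  refine ⟨?_, hsup.symm, ?_⟩
  · rw [← hsup]
    exact iSup_congr fun ω => by rw [ciInf_sum_mul_norm_sub_sq ω.2.2, hmean ω.1 ω.2.2]
  · simp_rw [← norm_sum_smul_sq, hinf]
    ring

/-- for unit vectors `x₁,…,x_L` in a real Hilbert space,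
`rad(x)² = max_ω min_y E_{i∼ω}‖xᵢ-y‖² = max_ω (1 - ‖∑ ωᵢxᵢ‖²) = 1 - min_ω V(ω)`
where `V` is the Gram quadratic form and `ω` ranges over probability vectors. -/
theorem stmt_16 {E : Type*} [NormedAddCommGroup E] [InnerProductSpace ℝ E]
    [CompleteSpace E] (L : ℕ) (hL : 0 < L) (x : Fin L → E)
    (hunit : ∀ i, ‖x i‖ = 1) :
    ((⨅ y : E, ⨆ i, ‖x i - y‖) ^ 2
        = ⨆ ω : {ω : Fin L → ℝ // (∀ i, 0 ≤ ω i) ∧ ∑ i, ω i = 1},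
            ⨅ y : E, ∑ i, ω.1 i * ‖x i - y‖ ^ 2) ∧
    ((⨅ y : E, ⨆ i, ‖x i - y‖) ^ 2
        = ⨆ ω : {ω : Fin L → ℝ // (∀ i, 0 ≤ ω i) ∧ ∑ i, ω i = 1},
            (1 - ‖∑ i, ω.1 i • x i‖ ^ 2)) ∧
    ((⨅ y : E, ⨆ i, ‖x i - y‖) ^ 2
        = 1 - ⨅ ω : {ω : Fin L → ℝ // (∀ i, 0 ≤ ω i) ∧ ∑ i, ω i = 1},
            ∑ i, ∑ j, ⟪x i, x j⟫ * ω.1 i * ω.1 j) :=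
  stmt_16_general L hL x hunit
end

section
/- The L-by-L matrix U with Uᵢᵢ = 1 for all i, U₁₂ = U₂₁ = γ, and Uᵢⱼ = −τ for all other i ≠ j, is positive semidefinite whenever 0 ≤ τ ≤ 1/(L−1) and −1/(L−1) ≤ γ ≤ 1. -/
/-!
The matrix depends affinely on `(τ, γ)` and positive semidefinite matrices form a convex set, so
it suffices to check the four corners of the rectangle `[0, t] × [-t, 1]`, `t = 1/(L-1)`. The
quadratic form is `(1 + τ) ∑ xᵢ² + 2 (γ + τ) x₀ x₁ - τ (∑ xᵢ)²`. At `τ = 0` it is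
`∑ xᵢ² + 2 γ x₀ x₁ ≥ 0` since `|γ| ≤ 1`. At `τ = t` it is nonnegative by Cauchy–Schwarz,
applied to `x` itself when `γ = -t` (the Gram matrix of a regular simplex), and when `γ = 1` to
the vector of length `L - 1` obtained by merging `x₀` and `x₁` into `x₀ + x₁`.
-/

open Matrix Finset

theorem mul_sq_sum_le_one_add_mul_sum_sq {ι : Type*} (s : Finset ι) (f : ι → ℝ) {t : ℝ}
    (ht : 0 ≤ t) (hts : t * (#s - 1) ≤ 1) :
    t * (∑ i ∈ s, f i) ^ 2 ≤ (1 + t) * ∑ i ∈ s, f i ^ 2 := by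
  have hsq : 0 ≤ ∑ i ∈ s, f i ^ 2 := sum_nonneg fun i _ => sq_nonneg (f i)
  calc t * (∑ i ∈ s, f i) ^ 2 ≤ t * (#s * ∑ i ∈ s, f i ^ 2) :=
        mul_le_mul_of_nonneg_left (sq_sum_le_card_mul_sum_sq ..) ht
    _ ≤ (1 + t) * ∑ i ∈ s, f i ^ 2 := by nlinarith

noncomputable def pairMatrix (L : ℕ) (τ γ : ℝ) : Matrix (Fin L) (Fin L) ℝ :=
  Matrix.of fun i j => if i = j then 1 else if i.val ≤ 1 ∧ j.val ≤ 1 then γ else -τ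

theorem convex_setOf_posSemidef_pairMatrix (L : ℕ) :
    Convex ℝ {p : ℝ × ℝ | (pairMatrix L p.1 p.2).PosSemidef} := by
  intro p hp q hq a b ha hb hab
  have hcomb : pairMatrix L (a • p + b • q).1 (a • p + b • q).2 =
      a • pairMatrix L p.1 p.2 + b • pairMatrix L q.1 q.2 := by
    ext i j
    simp only [pairMatrix, of_apply, Matrix.add_apply, Matrix.smul_apply, Prod.fst_add,
      Prod.snd_add, Prod.smul_fst, Prod.smul_snd, smul_eq_mul]
    obtain rfl : b = 1 - a := by linarith
    split_ifs <;> ring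
  simpa only [Set.mem_ofPred_eq, hcomb] using (hp.smul ha).add (hq.smul hb)

theorem isHermitian_pairMatrix (L : ℕ) (τ γ : ℝ) : (pairMatrix L τ γ).IsHermitian := by
  ext i j
  simp only [pairMatrix, conjTranspose_apply, of_apply, star_trivial, eq_comm (a := j), and_comm]

theorem dotProduct_pairMatrix_mulVec (n : ℕ) (τ γ : ℝ) (x : Fin (n + 2) → ℝ) :
    x ⬝ᵥ (pairMatrix (n + 2) τ γ *ᵥ x) =
      (1 + τ) * ∑ i, x i ^ 2 + 2 * (γ + τ) * (x 0 * x 1) - τ * (∑ i, x i) ^ 2 := by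
  have hrow (k : Fin n) : (∑ l : Fin n, if k = l then x l.succ.succ else -(τ * x l.succ.succ)) =
      (1 + τ) * x k.succ.succ - τ * ∑ l : Fin n, x l.succ.succ := by
    rw [sum_ite, filter_eq, filter_ne, if_pos (mem_univ k), sum_singleton, sum_neg_distrib,
      ← mul_sum, sum_erase_eq_sub (mem_univ k)]
    ring
  simp only [dotProduct, mulVec, pairMatrix, of_apply, ite_mul, one_mul, neg_mul,
    Fin.sum_univ_succ, Fin.coe_ofNat_eq_mod, Nat.zero_mod, zero_le, and_true, Fin.val_succ,
    add_le_iff_nonpos_left, nonpos_iff_eq_zero, Fin.val_eq_zero_iff, Fin.succ_zero_eq_one,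
    Fin.succ_ne_zero, and_false, ↓reduceIte, eq_comm (a := (0 : Fin _)), one_ne_zero,
    sum_neg_distrib, Fin.succ_inj, Fin.succ_succ_ne_one, hrow]
  have hdiag : ∑ k : Fin n, x k.succ.succ * ((1 + τ) * x k.succ.succ) =
      (1 + τ) * ∑ k : Fin n, x k.succ.succ ^ 2 := by
    rw [mul_sum]
    exact sum_congr rfl fun k _ => by ring
  simp only [mul_add, mul_sub, mul_neg, sum_add_distrib, sum_sub_distrib,
    sum_neg_distrib, hdiag, ← mul_sum, ← sum_mul]
  ring

theorem posSemidef_pairMatrix_iff (n : ℕ) (τ γ : ℝ) :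
    (pairMatrix (n + 2) τ γ).PosSemidef ↔ ∀ x : Fin (n + 2) → ℝ,
      0 ≤ (1 + τ) * ∑ i, x i ^ 2 + 2 * (γ + τ) * (x 0 * x 1) - τ * (∑ i, x i) ^ 2 := by
  rw [posSemidef_iff_dotProduct_mulVec, and_iff_right (isHermitian_pairMatrix _ _ _)]
  simp only [star_trivial, dotProduct_pairMatrix_mulVec]

theorem posSemidef_pairMatrix_zero (n : ℕ) {γ : ℝ} (hγ0 : -1 ≤ γ) (hγ1 : γ ≤ 1) :
    (pairMatrix (n + 2) 0 γ).PosSemidef := by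
  refine (posSemidef_pairMatrix_iff n 0 γ).2 fun x => ?_
  have hrest : 0 ≤ ∑ k : Fin n, x k.succ.succ ^ 2 := sum_nonneg fun k _ => sq_nonneg _
  simp only [Fin.sum_univ_succ, Fin.succ_zero_eq_one]
  nlinarith [mul_nonneg (by linarith : 0 ≤ 1 + γ) (sq_nonneg (x 0 + x 1)),
    mul_nonneg (by linarith : 0 ≤ 1 - γ) (sq_nonneg (x 0 - x 1))]

theorem posSemidef_pairMatrix_inv_neg_inv (n : ℕ) :
    (pairMatrix (n + 2) ((n : ℝ) + 1)⁻¹ (-((n : ℝ) + 1)⁻¹)).PosSemidef := by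
  refine (posSemidef_pairMatrix_iff n _ _).2 fun x => ?_
  have hCS := mul_sq_sum_le_one_add_mul_sum_sq univ x (t := ((n : ℝ) + 1)⁻¹) (by positivity)
    (by
      rw [card_univ, Fintype.card_fin]
      push_cast
      rw [add_sub_assoc, show (2 : ℝ) - 1 = 1 by norm_num, inv_mul_cancel₀ (by positivity)])
  linarith

theorem posSemidef_pairMatrix_inv_one (n : ℕ) :
    (pairMatrix (n + 2) ((n : ℝ) + 1)⁻¹ 1).PosSemidef := by
  refine (posSemidef_pairMatrix_iff n _ _).2 fun x => ?_
  have hCS := mul_sq_sum_le_one_add_mul_sum_sq univ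
    (Fin.cons (x 0 + x 1) fun k : Fin n => x k.succ.succ : Fin (n + 1) → ℝ)
    (t := ((n : ℝ) + 1)⁻¹) (by positivity)
    (by
      rw [card_univ, Fintype.card_fin]
      push_cast
      rw [add_sub_cancel_right, inv_mul_le_one₀ (by positivity)]
      linarith)
  simp only [Fin.sum_univ_succ, Fin.cons_zero, Fin.cons_succ, Fin.succ_zero_eq_one] at hCS ⊢
  linarith

/-- the `L×L` matrix with unit diagonal, entry `γ` in positions
`(1,2)` and `(2,1)`, and `-τ` elsewhere off the diagonal, is positive
semidefinite whenever `0 ≤ τ ≤ 1/(L-1)` and `-1/(L-1) ≤ γ ≤ 1`. -/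
theorem stmt_18 (L : ℕ) (hL : 3 ≤ L) (τ γ : ℝ)
    (hτ0 : 0 ≤ τ) (hτ1 : τ ≤ 1 / ((L : ℝ) - 1))
    (hγ0 : -1 / ((L : ℝ) - 1) ≤ γ) (hγ1 : γ ≤ 1) :
    (Matrix.of fun i j : Fin L =>
      if i = j then (1 : ℝ) else if i.val ≤ 1 ∧ j.val ≤ 1 then γ else -τ).PosSemidef := by
  obtain ⟨n, rfl⟩ : ∃ n, L = n + 2 := ⟨L - 2, by omega⟩
  set t : ℝ := ((n : ℝ) + 1)⁻¹
  have ht1 : t ≤ 1 := inv_le_one_of_one_le₀ (by linarith [n.cast_nonneg (α := ℝ)])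
  have hcast : ((n + 2 : ℕ) : ℝ) - 1 = (n : ℝ) + 1 := by push_cast; ring
  rw [hcast, one_div] at hτ1
  rw [hcast, neg_div, one_div] at hγ0
  have hmem : (τ, γ) ∈ convexHull ℝ ({0, t} ×ˢ {-t, 1}) := by
    rw [convexHull_prod, convexHull_pair, convexHull_pair, segment_eq_Icc (by positivity),
      segment_eq_Icc (by linarith)]
    exact ⟨⟨hτ0, hτ1⟩, hγ0, hγ1⟩
  refine (convex_setOf_posSemidef_pairMatrix _).convexHull_subset_iff.2 ?_ hmem
  rintro ⟨τ', γ'⟩ ⟨hτ' | hτ', hγ' | hγ'⟩ <;> subst hτ' hγ'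
  · exact posSemidef_pairMatrix_zero n (by linarith) (by linarith)
  · exact posSemidef_pairMatrix_zero n (by linarith) le_rfl
  · exact posSemidef_pairMatrix_inv_neg_inv n
  · exact posSemidef_pairMatrix_inv_one n
end
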